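/- arXiv:1410.3064 — 6 statements merged into one kernel-verified Lean document; each statement's English description precedes it below -/
import Mathlib

section
/- Let N ≥ 1 be an integer and c > 0. Consider the Lie splitting scheme G₁(δt) = M_s(λs(δt)) · M_f(λf(δt/N))^N where λf(δt/N) = 1 - cδt + c²A_f δt² + O(δt³) and λs(δt) = 1 - cδt + c²A_s δt² + O(δt³). Writing G₁ = [[1-α₁, α₁], [β₁, 1-β₁]] with α₁(δt) = 1 - λf(δt/N)^N and β₁(δt) = (1-λs(δt)) λf(δt/N)^N, the slope S₁(δt) = α₁(δt)/β₁(δt) satisfies S₁(δt) = N + cN(A_s - A_f + (N+1)/2) δt + O(δt²) as δt → 0. -/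
open Filter Topology Asymptotics

lemma aux_pow_isBigO (i j : ℕ) (h : i ≤ j) :
    (fun δ : ℝ => δ ^ j) =O[𝓝[>] (0:ℝ)] fun δ => δ ^ i := by
  apply Asymptotics.IsBigO.of_bound 1
  filter_upwards [Ioo_mem_nhdsGT_of_mem (by constructor <;> norm_num : (0:ℝ) ∈ Set.Ico 0 1)]
    with δ hδ
  rw [one_mul, Real.norm_eq_abs, Real.norm_eq_abs, abs_of_pos (pow_pos hδ.1 _),
    abs_of_pos (pow_pos hδ.1 _)]
  exact pow_le_pow_of_le_one hδ.1.le hδ.2.le h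

lemma aux_cont_isBigO_one (p : ℝ → ℝ) (hp : Continuous p) :
    p =O[𝓝[>] (0:ℝ)] (fun _ => (1:ℝ)) :=
  ((hp.tendsto 0).mono_left nhdsWithin_le_nhds).isBigO_one ℝ

lemma aux_id_isBigO_one : (fun δ : ℝ => δ) =O[𝓝[>] (0:ℝ)] (fun _ => (1:ℝ)) :=
  aux_cont_isBigO_one _ continuous_id

lemma aux_pow_tendsto_zero (j : ℕ) (hj : 1 ≤ j) :
    Tendsto (fun δ : ℝ => δ ^ j) (𝓝[>] (0:ℝ)) (𝓝 0) := by
  have := ((continuous_pow j (M := ℝ)).tendsto 0).mono_left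
    (nhdsWithin_le_nhds (s := Set.Ioi (0:ℝ)))
  simpa [zero_pow (by omega : j ≠ 0)] using this

set_option maxHeartbeats 1000000 in
/-- Taylor expansion of the slope `S₁(δt) = α₁(δt)/β₁(δt)` of the subcycled Lie
splitting scheme `G₁(δt) = M_s(λs(δt)) · M_f(λf(δt/N))^N`:
`S₁(δt) = N + cN(A_s - A_f + (N+1)/2) δt + O(δt²)` as `δt → 0⁺`. -/
theorem slope_expansion_subcycled_Lie
    (N : ℕ) (hN : 1 ≤ N) (c : ℝ) (hc : 0 < c)
    (Af As : ℝ) (lf ls : ℝ → ℝ)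
    (hlf : (fun δ => lf (δ / N) - (1 - c * δ + c ^ 2 * Af * δ ^ 2))
      =O[𝓝[>] (0:ℝ)] fun δ => δ ^ 3)
    (hls : (fun δ => ls δ - (1 - c * δ + c ^ 2 * As * δ ^ 2))
      =O[𝓝[>] (0:ℝ)] fun δ => δ ^ 3) :
    (fun δ => (1 - (lf (δ / N)) ^ N) / ((1 - ls δ) * (lf (δ / N)) ^ N)
        - ((N : ℝ) + c * N * (As - Af + ((N : ℝ) + 1) / 2) * δ))
      =O[𝓝[>] (0:ℝ)] fun δ => δ ^ 2 := by
  set l := 𝓝[>] (0:ℝ) with hl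
  set y : ℝ → ℝ := fun δ => lf (δ / N) - 1 with hy_def
  set F0 : ℝ → ℝ := fun δ =>
    1 - (N:ℝ)*c*δ + c^2*((N:ℝ)*Af + (N:ℝ)*((N:ℝ)-1)/2)*δ^2 with hF0_def
  have hF0cont : Continuous F0 := by rw [hF0_def]; continuity
  -- basic big-O facts
  have ha1 : (fun δ => lf (δ / N) - (1 - c * δ + c ^ 2 * Af * δ ^ 2)) =O[l] fun δ => δ :=
    (hlf.trans (aux_pow_isBigO 1 3 (by norm_num))).congr_right fun δ => pow_one δ
  have hx : (fun δ : ℝ => -(c*δ) + c^2*Af*δ^2) =O[l] fun δ => δ := by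
    have h1 : (fun δ:ℝ => δ * (-c + c^2*Af*δ)) =O[l] fun δ:ℝ => δ * 1 :=
      (isBigO_refl _ _).mul (aux_cont_isBigO_one _ (by continuity))
    exact h1.congr (fun δ => by ring) (fun δ => by ring)
  have hy : y =O[l] fun δ => δ := by
    have := hx.add ha1
    exact this.congr_left (fun δ => by simp only [hy_def]; ring)
  have hyO1 : y =O[l] (fun _ => (1:ℝ)) := hy.trans aux_id_isBigO_one
  have hx1 : (fun δ : ℝ => -(c*δ) + c^2*Af*δ^2) =O[l] (fun _ => (1:ℝ)) :=
    hx.trans aux_id_isBigO_one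
  -- binomial expansion
  have hm3 : 3 ≤ max (N+1) 3 := le_max_right _ _
  have hexp : ∀ δ, lf (δ / N) ^ N = (1 + (N:ℝ)*y δ + (N.choose 2 : ℝ)*(y δ)^2)
      + ∑ i ∈ Finset.Ico 3 (max (N+1) 3), y δ ^ i * (N.choose i : ℝ) := by
    intro δ
    have h1 : lf (δ / N) = y δ + 1 := by simp [hy_def]
    rw [h1, add_pow]
    simp only [one_pow, mul_one]
    rw [Finset.sum_subset (Finset.range_subset_range.2 (le_max_left (N+1) 3))
      (fun i _ hi => by
        have hNi : N < i := by
          simp only [Finset.mem_range] at hi; omega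
        simp [Nat.choose_eq_zero_of_lt hNi])]
    rw [Finset.range_eq_Ico, ← Finset.sum_Ico_consecutive _ (Nat.zero_le 3) hm3]
    congr 1
    rw [← Finset.range_eq_Ico]
    rw [Finset.sum_range_succ, Finset.sum_range_succ, Finset.sum_range_one]
    simp [Nat.choose_one_right]
    ring
  have hsum : (fun δ => ∑ i ∈ Finset.Ico 3 (max (N+1) 3), y δ ^ i * (N.choose i : ℝ))
      =O[l] fun δ => δ^3 := by
    apply Asymptotics.IsBigO.fun_sum
    intro i hi
    have h3i : 3 ≤ i := (Finset.mem_Ico.1 hi).1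
    have h1 : (fun δ => y δ ^ i) =O[l] fun δ => δ^3 :=
      (hy.pow i).trans (aux_pow_isBigO 3 i h3i)
    exact (h1.const_mul_left _).congr_left (fun δ => mul_comm _ _)
  have hC2 : (N.choose 2 : ℝ) = (N:ℝ)*((N:ℝ)-1)/2 := Nat.cast_choose_two (K := ℝ) N
  have hbr : (fun δ => (1 + (N:ℝ)*y δ + (N.choose 2:ℝ)*(y δ)^2) - F0 δ)
      =O[l] fun δ => δ^3 := by
    have t1 : (fun δ => (N:ℝ) * (lf (δ / N) - (1 - c*δ + c^2*Af*δ^2)))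
        =O[l] fun δ => δ^3 := hlf.const_mul_left _
    have t2 : (fun δ => ((N:ℝ)*((N:ℝ)-1)/2) *
        ((lf (δ / N) - (1 - c*δ + c^2*Af*δ^2)) * (y δ + (-(c*δ) + c^2*Af*δ^2))))
        =O[l] fun δ => δ^3 := by
      have h2 := hlf.mul (hyO1.add hx1)
      exact ((h2.congr_right (fun δ => mul_one _)).const_mul_left _)
    have t3 : (fun δ => ((N:ℝ)*((N:ℝ)-1)/2) * (δ^3 * (-(2*c^3*Af) + c^4*Af^2*δ)))
        =O[l] fun δ => δ^3 := by
      have h3 := (isBigO_refl (fun δ:ℝ => δ^3) l).mul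
        (aux_cont_isBigO_one (fun δ => -(2*c^3*Af) + c^4*Af^2*δ) (by continuity))
      exact ((h3.congr_right (fun δ => mul_one _)).const_mul_left _)
    have h4 := (t1.add t2).add t3
    refine h4.congr_left fun δ => ?_
    simp only [hy_def, hC2]
    ring
  have hu : (fun δ => lf (δ / N) ^ N - F0 δ) =O[l] fun δ => δ^3 := by
    have h5 := hbr.add hsum
    refine h5.congr_left fun δ => ?_
    rw [hexp δ]
    ring
  -- boundedness facts
  have hLO : (fun δ:ℝ => (N:ℝ) + c*N*(As - Af + ((N:ℝ)+1)/2)*δ) =O[l] (fun _ => (1:ℝ)) :=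
    aux_cont_isBigO_one _ (by continuity)
  have hs0O : (fun δ:ℝ => c*δ - c^2*As*δ^2) =O[l] (fun _ => (1:ℝ)) :=
    aux_cont_isBigO_one _ (by continuity)
  have hF0O : F0 =O[l] (fun _ => (1:ℝ)) := aux_cont_isBigO_one _ hF0cont
  have huO1 : (fun δ => lf (δ / N) ^ N - F0 δ) =O[l] (fun _ => (1:ℝ)) :=
    hu.trans ((aux_pow_isBigO 0 3 (by norm_num)).congr_right fun δ => pow_zero δ)
  -- numerator estimate
  have hnum : (fun δ => (1 - lf (δ/N)^N)
      - ((N:ℝ) + c*N*(As - Af + ((N:ℝ)+1)/2)*δ) * ((1 - ls δ) * lf (δ/N)^N))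
      =O[l] fun δ => δ^3 := by
    set Q : ℝ → ℝ := fun δ =>
        (((1/2:ℝ) * (N:ℝ) * c^3 * As + (N:ℝ) * c^3 * As^2 - (N:ℝ) * c^3 * Af * As
            + (N:ℝ)^2 * c^3 + (1/2:ℝ) * (N:ℝ)^2 * c^3 * As - 2 * (N:ℝ)^2 * c^3 * Af)
          + ((1/4:ℝ) * (N:ℝ)^2 * c^4 - (1/2:ℝ) * (N:ℝ)^2 * c^4 * As
            - (N:ℝ)^2 * c^4 * As^2 - (N:ℝ)^2 * c^4 * Af + (N:ℝ)^2 * c^4 * Af * As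
            + (N:ℝ)^2 * c^4 * Af^2 - (1/2:ℝ) * (N:ℝ)^3 * c^4 * As
            - (1/4:ℝ) * (N:ℝ)^4 * c^4) * δ
          + (-(1/4:ℝ) * (N:ℝ)^2 * c^5 * As - (1/2:ℝ) * (N:ℝ)^2 * c^5 * As^2
            + (N:ℝ)^2 * c^5 * Af * As + (N:ℝ)^2 * c^5 * Af * As^2
            - (N:ℝ)^2 * c^5 * Af^2 * As + (1/2:ℝ) * (N:ℝ)^3 * c^5 * As^2
            + (1/4:ℝ) * (N:ℝ)^4 * c^5 * As) * δ^2) with hQ_def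
    have hQcont : Continuous Q := by rw [hQ_def]; fun_prop
    have hD : (fun δ:ℝ => δ^3 * Q δ) =O[l] fun δ => δ^3 := by
      have h6 := (isBigO_refl (fun δ:ℝ => δ^3) l).mul (aux_cont_isBigO_one Q hQcont)
      exact h6.congr_right (fun δ => mul_one _)
    have hLsu : (fun δ => ((N:ℝ) + c*N*(As - Af + ((N:ℝ)+1)/2)*δ) * (c*δ - c^2*As*δ^2)
        * (lf (δ / N) ^ N - F0 δ)) =O[l] fun δ => δ^3 := by
      have h7 := (hLO.mul hs0O).mul hu
      exact h7.congr_right (fun δ => by ring)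
    have hLbF : (fun δ => ((N:ℝ) + c*N*(As - Af + ((N:ℝ)+1)/2)*δ)
        * (ls δ - (1 - c * δ + c ^ 2 * As * δ ^ 2)) * F0 δ) =O[l] fun δ => δ^3 := by
      have h8 := (hLO.mul hls).mul hF0O
      exact h8.congr_right (fun δ => by ring)
    have hLbu : (fun δ => ((N:ℝ) + c*N*(As - Af + ((N:ℝ)+1)/2)*δ)
        * (ls δ - (1 - c * δ + c ^ 2 * As * δ ^ 2)) * (lf (δ / N) ^ N - F0 δ))
        =O[l] fun δ => δ^3 := by
      have h9 := (hLO.mul hls).mul huO1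
      exact h9.congr_right (fun δ => by ring)
    have h10 := ((((hD.sub hu).sub hLsu).add hLbF).add hLbu)
    refine h10.congr_left fun δ => ?_
    simp only [hF0_def, hQ_def]
    ring
  -- tendsto facts
  have hut0 : Tendsto (fun δ => lf (δ / N) ^ N - F0 δ) l (𝓝 0) :=
    hu.trans_tendsto (aux_pow_tendsto_zero 3 (by norm_num))
  have hF0t : Tendsto F0 l (𝓝 1) := by
    have h1 : Tendsto F0 l (𝓝 (F0 0)) := (hF0cont.tendsto 0).mono_left nhdsWithin_le_nhds
    have h2 : F0 0 = 1 := by simp [hF0_def]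
    rwa [h2] at h1
  have hXt : Tendsto (fun δ => lf (δ/N)^N) l (𝓝 1) := by
    have h3 := hF0t.add hut0
    simp only [add_zero] at h3
    exact h3.congr fun δ => by ring
  have hbδ : Tendsto (fun δ => (ls δ - (1 - c*δ + c^2*As*δ^2)) * δ⁻¹) l (𝓝 0) := by
    have h1 : (fun δ => (ls δ - (1 - c*δ + c^2*As*δ^2)) * δ⁻¹) =O[l] fun δ => δ^2 := by
      have h2 := hls.mul (isBigO_refl (fun δ:ℝ => δ⁻¹) l)
      refine h2.congr' EventuallyEq.rfl ?_
      filter_upwards [self_mem_nhdsWithin] with δ (hδ : δ ∈ Set.Ioi 0)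
      rw [pow_succ, mul_assoc, mul_inv_cancel₀ (ne_of_gt hδ), mul_one]
    exact h1.trans_tendsto (aux_pow_tendsto_zero 2 (by norm_num))
  have h1lst : Tendsto (fun δ => (1 - ls δ)/δ) l (𝓝 c) := by
    have hc1 : Tendsto (fun δ:ℝ => c - c^2*As*δ) l (𝓝 c) := by
      have h4 := ((by continuity : Continuous fun δ:ℝ => c - c^2*As*δ).tendsto 0).mono_left
        (nhdsWithin_le_nhds (s := Set.Ioi (0:ℝ)))
      simpa using h4
    have h2 : Tendsto (fun δ => (c - c^2*As*δ)
        - (ls δ - (1 - c*δ + c^2*As*δ^2)) * δ⁻¹) l (𝓝 c) := by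
      simpa using hc1.sub hbδ
    refine Filter.Tendsto.congr' ?_ h2
    filter_upwards [self_mem_nhdsWithin] with δ (hδ : δ ∈ Set.Ioi 0)
    have hδ0 : δ ≠ 0 := ne_of_gt hδ
    field_simp
    ring
  have hβt : Tendsto (fun δ => (1 - ls δ)/δ * lf (δ/N)^N) l (𝓝 c) := by
    have h5 := h1lst.mul hXt
    simpa using h5
  have hβpos : ∀ᶠ δ in l, 0 < (1 - ls δ) * lf (δ/N)^N := by
    have h3 : ∀ᶠ δ in l, 0 < (1 - ls δ)/δ * lf (δ/N)^N :=
      hβt.eventually (eventually_gt_nhds hc)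
    filter_upwards [h3, self_mem_nhdsWithin] with δ h3 (hδ : δ ∈ Set.Ioi 0)
    have h6 := mul_pos h3 hδ
    have hδ0 : δ ≠ 0 := ne_of_gt hδ
    have heq : ((1 - ls δ)/δ * lf (δ/N)^N) * δ = (1 - ls δ) * lf (δ/N)^N := by
      field_simp
    rw [← heq]; exact h6
  have hinvt : Tendsto (fun δ => δ / ((1 - ls δ) * lf (δ/N)^N)) l (𝓝 c⁻¹) := by
    have h5 := hβt.inv₀ (ne_of_gt hc)
    refine Filter.Tendsto.congr' ?_ h5
    filter_upwards [self_mem_nhdsWithin] with δ (hδ : δ ∈ Set.Ioi 0)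
    have h7 : (1 - ls δ)/δ * lf (δ/N)^N = ((1 - ls δ) * lf (δ/N)^N)/δ := by ring
    rw [h7, inv_div]
  have hinvO : (fun δ => δ / ((1 - ls δ) * lf (δ/N)^N)) =O[l] (fun _ => (1:ℝ)) :=
    hinvt.isBigO_one ℝ
  -- final assembly
  have h8 : (fun δ => ((1 - lf (δ/N)^N)/((1 - ls δ)*lf (δ/N)^N)
      - ((N:ℝ) + c*N*(As - Af + ((N:ℝ)+1)/2)*δ)) * δ) =O[l] fun δ => δ^3 := by
    have h9 := hnum.mul hinvO
    refine h9.congr' ?_ (Filter.EventuallyEq.of_eq (funext fun δ => mul_one _))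
    filter_upwards [hβpos] with δ hβ
    have hβne : (1 - ls δ) * lf (δ/N)^N ≠ 0 := ne_of_gt hβ
    generalize (1 - ls δ) * lf (δ/N)^N = β at hβne ⊢
    field_simp
  have h11 := h8.mul (isBigO_refl (fun δ:ℝ => δ⁻¹) l)
  refine h11.congr' ?_ ?_
  · filter_upwards [self_mem_nhdsWithin] with δ (hδ : δ ∈ Set.Ioi 0)
    rw [mul_assoc, mul_inv_cancel₀ (ne_of_gt hδ), mul_one]
  · filter_upwards [self_mem_nhdsWithin] with δ (hδ : δ ∈ Set.Ioi 0)
    rw [pow_succ, mul_assoc, mul_inv_cancel₀ (ne_of_gt hδ), mul_one]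
end

section
/- Let N ≥ 1, c > 0 and θ_f = 1, θ_s = 0, i.e. λf(δt) = 1/(1 + Ncδt) and λs(δt) = 1 - cδt. For the non-subcycled Lie scheme G₂(δt) = (M_s(λs(δt/N)) M_f(λf(δt/N)))^N, with α₂(δt) = 1 - λf(δt/N) and β₂(δt) = (1 - λs(δt/N)) λf(δt/N), the ratio α₂(δt)/β₂(δt) equals exactly N for all δt > 0 in the stability interval; hence the numerical asymptotic state coincides exactly with the exact one. -/
/-- For `θ_f = 1, θ_s = 0`, i.e. `λf(δt) = 1/(1 + Ncδt)` and `λs(δt) = 1 - cδt`,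
the non-subcycled Lie scheme `G₂(δt) = (M_s(λs(δt/N)) M_f(λf(δt/N)))^N` has
`α₂(δt) = 1 - λf(δt/N)`, `β₂(δt) = (1 - λs(δt/N)) λf(δt/N)` and the ratio
`α₂(δt)/β₂(δt)` equals exactly `N` for all admissible `δt > 0`. -/
theorem exact_slope_implicit_explicit_Lie
    (N : ℕ) (hN : 1 ≤ N) (c : ℝ) (hc : 0 < c)
    (δt : ℝ) (hδt : 0 < δt) (hstab : c * δt / N < 1) :
    let lf : ℝ → ℝ := fun s => 1 / (1 + N * c * s)
    let ls : ℝ → ℝ := fun s => 1 - c * s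
    (1 - lf (δt / N)) / ((1 - ls (δt / N)) * lf (δt / N)) = N := by
  intro lf ls
  have hN0 : (N : ℝ) ≠ 0 := Nat.cast_ne_zero.mpr (by omega)
  have hNpos : (0:ℝ) < N := by positivity
  have h1 : (N:ℝ) * c * (δt / N) = c * δt := by field_simp
  have hpos : (0:ℝ) < 1 + c * δt := by positivity
  simp only [lf, ls, h1]
  have hc0 : c * δt ≠ 0 := by positivity
  field_simp
  ring
end

section
/- Let c > 0, N > 0 and (u0, v0) ∈ ℝ² with u0 + c > v0. Then the solution of the nonlinear system u' = -N(u-v)(c + (u-v)), v' = (u-v)(c + (u-v)) with initial datum (u0, v0) exists for all t ≥ 0, stays on the line u + Nv = u0 + N v0, and converges as t → +∞ to the point ((u0 + N v0)/(N+1)) · (1, 1). If u0 + c = v0 the solution is constant. If u0 + c < v0 the maximal solution blows up in finite positive time. -/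
open Filter Topology

section Aux
open Real Set

lemma part1 (c N u0 v0 : ℝ) (hc : 0 < c) (hN : 0 < N) (h : u0 + c > v0) :
    ∃ u v : ℝ → ℝ, u 0 = u0 ∧ v 0 = v0 ∧
      (∀ t : ℝ, 0 ≤ t →
        HasDerivAt u (-N * c * (u t - v t) - N * (u t - v t) ^ 2) t ∧
        HasDerivAt v (c * (u t - v t) + (u t - v t) ^ 2) t) ∧
      (∀ t : ℝ, 0 ≤ t → u t + N * v t = u0 + N * v0) ∧
      Tendsto u atTop (𝓝 ((u0 + N * v0) / (N + 1))) ∧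
      Tendsto v atTop (𝓝 ((u0 + N * v0) / (N + 1))) := by
  set w0 : ℝ := u0 - v0 with hw0def
  have hw0 : 0 < c + w0 := by simp [hw0def]; linarith
  set k : ℝ := (N + 1) * c with hkdef
  have hk : 0 < k := by positivity
  set D : ℝ → ℝ := fun t => (c + w0) * Real.exp (k * t) - w0 with hDdef
  have hDpos : ∀ t : ℝ, 0 ≤ t → 0 < D t := by
    intro t ht
    rcases le_or_gt w0 0 with h0 | h0
    · have : 0 < (c + w0) * Real.exp (k * t) := by positivity
      simp only [hDdef]; linarith
    · have h1 : (1 : ℝ) ≤ Real.exp (k * t) := by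
        rw [Real.one_le_exp_iff]; positivity
      have : c + w0 ≤ (c + w0) * Real.exp (k * t) := le_mul_of_one_le_right hw0.le h1
      simp only [hDdef]; linarith
  set w : ℝ → ℝ := fun t => c * w0 / D t with hwdef
  set s : ℝ := u0 + N * v0 with hsdef
  refine ⟨fun t => (s + N * w t) / (N + 1), fun t => (s - w t) / (N + 1), ?_, ?_, ?_, ?_, ?_, ?_⟩
  · have : D 0 = c := by simp [hDdef]
    simp only [hwdef, this, hsdef, hw0def]
    field_simp
    ring
  · have : D 0 = c := by simp [hDdef]
    simp only [hwdef, this, hsdef, hw0def]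
    field_simp
    ring
  · intro t ht
    have hDne : D t ≠ 0 := (hDpos t ht).ne'
    have hD' : HasDerivAt D ((c + w0) * (k * Real.exp (k * t))) t := by
      have he : HasDerivAt (fun t : ℝ => Real.exp (k * t)) (k * Real.exp (k * t)) t := by
        have := ((hasDerivAt_id t).const_mul k).exp
        simpa [mul_comm] using this
      exact (he.const_mul (c + w0)).sub_const w0
    have hw' : HasDerivAt w (-(N + 1) * w t * (c + w t)) t := by
      have := ((hD'.inv hDne).const_mul (c * w0))
      refine this.congr_deriv ?_
      have hDt : D t = (c + w0) * Real.exp (k * t) - w0 := rfl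
      simp only [hwdef]
      field_simp
      rw [hDt, hkdef]
      ring
    have huv : (s + N * w t) / (N + 1) - (s - w t) / (N + 1) = w t := by
      field_simp; ring
    constructor
    · have : HasDerivAt (fun t => (s + N * w t) / (N + 1))
        ((N * (-(N + 1) * w t * (c + w t))) / (N + 1)) t :=
        ((hasDerivAt_const t s).add (hw'.const_mul N)).div_const (N + 1) |>.congr_deriv (by ring)
      rw [huv]
      convert this using 1
      field_simp
      ring
    · have : HasDerivAt (fun t => (s - w t) / (N + 1))
        ((-(-(N + 1) * w t * (c + w t))) / (N + 1)) t :=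
        ((hasDerivAt_const t s).sub hw').div_const (N + 1) |>.congr_deriv (by ring)
      rw [huv]
      convert this using 1
      field_simp
  · intro t ht
    field_simp
    ring
  · have hDtop : Tendsto D atTop atTop := by
      apply tendsto_atTop_add_const_right
      exact (Real.tendsto_exp_atTop.comp ((tendsto_id.const_mul_atTop hk))).const_mul_atTop hw0
    have hwlim : Tendsto w atTop (𝓝 0) := tendsto_const_nhds.div_atTop hDtop
    have := ((tendsto_const_nhds : Tendsto (fun _ : ℝ => s) atTop (𝓝 s)).add
      (hwlim.const_mul N)).div_const (N + 1)
    simpa using this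
  · have hDtop : Tendsto D atTop atTop := by
      apply tendsto_atTop_add_const_right
      exact (Real.tendsto_exp_atTop.comp ((tendsto_id.const_mul_atTop hk))).const_mul_atTop hw0
    have hwlim : Tendsto w atTop (𝓝 0) := tendsto_const_nhds.div_atTop hDtop
    have := ((tendsto_const_nhds : Tendsto (fun _ : ℝ => s) atTop (𝓝 s)).sub
      hwlim).div_const (N + 1)
    simpa using this

lemma part3 (c N u0 v0 : ℝ) (hc : 0 < c) (hN : 0 < N) (h : u0 + c < v0) :
    ¬ ∃ u v : ℝ → ℝ, u 0 = u0 ∧ v 0 = v0 ∧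
      (∀ t : ℝ, 0 ≤ t →
        HasDerivAt u (-N * c * (u t - v t) - N * (u t - v t) ^ 2) t ∧
        HasDerivAt v (c * (u t - v t) + (u t - v t) ^ 2) t) := by
  rintro ⟨u, v, hu0, hv0, hode⟩
  set w : ℝ → ℝ := fun t => u t - v t with hwdef
  have hw' : ∀ t : ℝ, 0 ≤ t → HasDerivAt w (-(N + 1) * w t * (w t + c)) t := by
    intro t ht
    have := ((hode t ht).1.sub (hode t ht).2)
    refine this.congr_deriv ?_
    simp only [hwdef]
    ring
  have hwcont : ∀ t : ℝ, 0 ≤ t → ContinuousAt w t := fun t ht => (hw' t ht).continuousAt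
  have hw00 : w 0 + c < 0 := by simp [hwdef, hu0, hv0]; linarith
  -- Step A: w t + c < 0 for all t ≥ 0
  have stepA : ∀ t : ℝ, 0 ≤ t → w t + c < 0 := by
    by_contra hA
    push_neg at hA
    obtain ⟨t1, ht1, hy1⟩ := hA
    -- IVT gives T with w T + c = 0
    have hcont : ContinuousOn (fun t => w t + c) (Icc 0 t1) := by
      intro x hx
      exact ((hwcont x hx.1).continuousWithinAt.add continuousWithinAt_const)
    have hmem : (0 : ℝ) ∈ Icc (w 0 + c) (w t1 + c) := ⟨hw00.le, hy1⟩
    obtain ⟨T, hT, hyT⟩ := intermediate_value_Icc ht1 hcont hmem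
    -- Gronwall backwards: g s = w (T - s) + c
    set g : ℝ → ℝ := fun s => w (T - s) + c with hgdef
    have hTnonneg : 0 ≤ T := hT.1
    obtain ⟨C, hC⟩ := (isCompact_Icc (a := (0:ℝ)) (b := T)).exists_bound_of_continuousOn
      (fun x hx => (hwcont x hx.1).continuousWithinAt)
    have hC0 : 0 ≤ C := le_trans (norm_nonneg _) (hC 0 ⟨le_refl 0, hTnonneg⟩)
    set K : ℝ := (N + 1) * C with hKdef
    have hg' : ∀ s ∈ Icc (0:ℝ) T, HasDerivAt g ((N + 1) * w (T - s) * g s) s := by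
      intro s hs
      have hTs : (0:ℝ) ≤ T - s := by linarith [hs.2]
      have hinner : HasDerivAt (fun s : ℝ => T - s) (-1) s := by
        simpa using (hasDerivAt_id s).const_sub T
      have houter : HasDerivAt (fun t => w t + c) (-(N + 1) * w (T - s) * (w (T - s) + c)) (T - s) :=
        (hw' _ hTs).add_const c
      have := houter.comp s hinner
      refine this.congr_deriv ?_
      simp only [hgdef]
      ring
    have hgc : ContinuousOn g (Icc 0 T) := by
      intro x hx
      exact ((hg' x hx).continuousAt).continuousWithinAt
    have hbound : ∀ s ∈ Ico (0:ℝ) T, ‖(N + 1) * w (T - s) * g s‖ ≤ K * ‖g s‖ + 0 := by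
      intro s hs
      have hTs : T - s ∈ Icc (0:ℝ) T := ⟨by linarith [hs.2], by linarith [hs.1]⟩
      have := hC (T - s) hTs
      rw [add_zero, norm_mul, norm_mul, hKdef]
      have h1 : ‖(N + 1 : ℝ)‖ = N + 1 := by rw [Real.norm_eq_abs, abs_of_pos]; linarith
      rw [h1]
      have : ‖w (T - s)‖ * ‖g s‖ ≤ C * ‖g s‖ :=
        mul_le_mul_of_nonneg_right this (norm_nonneg _)
      calc (N + 1) * ‖w (T - s)‖ * ‖g s‖ = (N + 1) * (‖w (T - s)‖ * ‖g s‖) := by ring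
        _ ≤ (N + 1) * (C * ‖g s‖) := by nlinarith
        _ = (N + 1) * C * ‖g s‖ := by ring
    have hg0 : ‖g 0‖ ≤ 0 := by
      simp only [hgdef, sub_zero]
      rw [show w T + c = 0 from hyT]; simp
    have := norm_le_gronwallBound_of_norm_deriv_right_le hgc
      (fun x hx => (hg' x (Ico_subset_Icc_self hx)).hasDerivWithinAt) hg0 hbound T
      ⟨hTnonneg, le_refl T⟩
    rw [gronwallBound_ε0_δ0] at this
    have hgT : g T = 0 := by
      have := norm_le_zero_iff.mp this
      exact this
    simp only [hgdef, sub_self] at hgT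
    linarith
  -- Step B: z = 1/w blows past 0
  have hwneg : ∀ t : ℝ, 0 ≤ t → w t < 0 := fun t ht => by linarith [stepA t ht]
  set z : ℝ → ℝ := fun t => (w t)⁻¹ with hzdef
  have hz' : ∀ t : ℝ, 0 ≤ t → HasDerivAt z ((N + 1) * (1 + c * z t)) t := by
    intro t ht
    have hne := (hwneg t ht).ne
    have := (hw' t ht).inv hne
    refine this.congr_deriv ?_
    simp only [hzdef]
    field_simp
  have hzlt : ∀ t : ℝ, 0 ≤ t → 0 < 1 + c * z t := by
    intro t ht
    have h1 : 1 + c * z t = (w t + c) / w t := by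
      simp only [hzdef]
      field_simp [(hwneg t ht).ne]
    rw [h1]
    exact div_pos_of_neg_of_neg (stepA t ht) (hwneg t ht)
  have hzcont : ContinuousOn z (Ici 0) :=
    fun t ht => (hz' t ht).continuousAt.continuousWithinAt
  have hzmono : MonotoneOn z (Ici 0) := by
    apply monotoneOn_of_deriv_nonneg (convex_Ici 0) hzcont
    · intro x hx
      rw [interior_Ici] at hx
      exact (hz' x (le_of_lt hx)).differentiableAt.differentiableWithinAt
    · intro x hx
      rw [interior_Ici] at hx
      rw [(hz' x (le_of_lt hx)).deriv]
      have := hzlt x (le_of_lt hx)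
      positivity
  set m : ℝ := 1 + c * z 0 with hmdef
  have hm : 0 < m := hzlt 0 le_rfl
  set φ : ℝ → ℝ := fun t => z t - (N + 1) * m * t with hφdef
  have hφ' : ∀ t : ℝ, 0 ≤ t → HasDerivAt φ ((N + 1) * (1 + c * z t) - (N + 1) * m) t := by
    intro t ht
    exact (hz' t ht).sub (((hasDerivAt_id t).const_mul ((N + 1) * m)).congr_deriv (by ring))
  have hφmono : MonotoneOn φ (Ici 0) := by
    apply monotoneOn_of_deriv_nonneg (convex_Ici 0)
    · intro t ht
      exact (hφ' t ht).continuousAt.continuousWithinAt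
    · intro x hx
      rw [interior_Ici] at hx
      exact (hφ' x (le_of_lt hx)).differentiableAt.differentiableWithinAt
    · intro x hx
      rw [interior_Ici] at hx
      rw [(hφ' x (le_of_lt hx)).deriv]
      have hz0x : z 0 ≤ z x := hzmono (self_mem_Ici) (Set.mem_Ici.mpr (le_of_lt hx)) (le_of_lt hx)
      have : m ≤ 1 + c * z x := by simp only [hmdef]; nlinarith
      nlinarith
  have hz0neg : z 0 < 0 := by
    simp only [hzdef]
    exact inv_lt_zero.mpr (hwneg 0 le_rfl)
  set T1 : ℝ := (-z 0) / ((N + 1) * m) + 1 with hT1def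
  have hT1pos : 0 < T1 := by
    have h2 : 0 < (-z 0) / ((N + 1) * m) := by
      apply div_pos (by linarith) (by positivity)
    rw [hT1def]
    linarith
  have hφT : φ 0 ≤ φ T1 := hφmono self_mem_Ici hT1pos.le hT1pos.le
  have hzT1 : z T1 < 0 := by
    simp only [hzdef]
    exact inv_lt_zero.mpr (hwneg T1 hT1pos.le)
  have hkey : (N + 1) * m * T1 = -z 0 + (N + 1) * m := by
    rw [hT1def]
    field_simp
  simp only [hφdef] at hφT
  rw [hkey] at hφT
  have hNm : 0 < (N + 1) * m := by positivity
  simp only [mul_zero] at hφT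
  linarith

end Aux

/-- Longtime behavior of the nonlinear system
`u' = -Nc(u-v) - N(u-v)²`, `v' = c(u-v) + (u-v)²`:
if `u0 + c > v0` the solution is global for `t ≥ 0`, stays on the line
`u + Nv = u0 + N v0` and converges to `((u0+Nv0)/(N+1))·(1,1)`;
if `u0 + c = v0` the constant functions solve the system;
if `u0 + c < v0` there is no global forward-in-time solution (finite-time blow-up). -/
theorem nonlinear_system_longtime_behavior
    (c N u0 v0 : ℝ) (hc : 0 < c) (hN : 0 < N) :
    (u0 + c > v0 →
      ∃ u v : ℝ → ℝ, u 0 = u0 ∧ v 0 = v0 ∧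
        (∀ t : ℝ, 0 ≤ t →
          HasDerivAt u (-N * c * (u t - v t) - N * (u t - v t) ^ 2) t ∧
          HasDerivAt v (c * (u t - v t) + (u t - v t) ^ 2) t) ∧
        (∀ t : ℝ, 0 ≤ t → u t + N * v t = u0 + N * v0) ∧
        Tendsto u atTop (𝓝 ((u0 + N * v0) / (N + 1))) ∧
        Tendsto v atTop (𝓝 ((u0 + N * v0) / (N + 1)))) ∧
    (u0 + c = v0 →
      ∀ t : ℝ,
        HasDerivAt (fun _ : ℝ => u0) (-N * c * (u0 - v0) - N * (u0 - v0) ^ 2) t ∧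
        HasDerivAt (fun _ : ℝ => v0) (c * (u0 - v0) + (u0 - v0) ^ 2) t) ∧
    (u0 + c < v0 →
      ¬ ∃ u v : ℝ → ℝ, u 0 = u0 ∧ v 0 = v0 ∧
        (∀ t : ℝ, 0 ≤ t →
          HasDerivAt u (-N * c * (u t - v t) - N * (u t - v t) ^ 2) t ∧
          HasDerivAt v (c * (u t - v t) + (u t - v t) ^ 2) t)) := by
  refine ⟨fun h1 => part1 c N u0 v0 hc hN h1, fun h2 t => ?_, fun h3 => part3 c N u0 v0 hc hN h3⟩
  have hd : u0 - v0 = -c := by linarith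
  constructor
  · have he : -N * c * (u0 - v0) - N * (u0 - v0) ^ 2 = 0 := by rw [hd]; ring
    rw [he]; exact hasDerivAt_const t u0
  · have he : c * (u0 - v0) + (u0 - v0) ^ 2 = 0 := by rw [hd]; ring
    rw [he]; exact hasDerivAt_const t v0
end

section
/- With the notations of the splitting eigenvalue analysis (P, Q, Σ positive nonincreasing differentiable functions on an interval I, with D = (P+Q+Σ)² - 4PQ > 0), the largest root τ⁺(μ) = (P(μ)+Q(μ)+Σ(μ)+√D(μ))/2 is a nonincreasing function of μ on I. -/
private lemma sqrtD_lower (p q s : ℝ) (hp : 0 < p) (hq : 0 < q) (hs : 0 < s) :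
    q - p - s ≤ Real.sqrt ((p + q + s) ^ 2 - 4 * p * q) := by
  rcases le_or_gt (q - p - s) 0 with h | h
  · exact h.trans (Real.sqrt_nonneg _)
  · have hsq : (q - p - s) ^ 2 ≤ (p + q + s) ^ 2 - 4 * p * q := by nlinarith
    calc q - p - s = Real.sqrt ((q - p - s) ^ 2) := by
          rw [Real.sqrt_sq h.le]
      _ ≤ _ := Real.sqrt_le_sqrt hsq

private lemma aux_p (p₁ p₂ q s : ℝ) (hp1 : 0 < p₁) (hp : p₁ ≤ p₂) (hq : 0 < q)
    (hs : 0 < s) :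
    (p₁ + q + s + Real.sqrt ((p₁ + q + s) ^ 2 - 4 * p₁ * q)) / 2 ≤
      (p₂ + q + s + Real.sqrt ((p₂ + q + s) ^ 2 - 4 * p₂ * q)) / 2 := by
  set D₁ := (p₁ + q + s) ^ 2 - 4 * p₁ * q with hD₁
  set D₂ := (p₂ + q + s) ^ 2 - 4 * p₂ * q with hD₂
  have hD₁pos : 0 < D₁ := by
    have h1 : 0 < s * (2 * (p₁ + q) + s) := by positivity
    nlinarith [sq_nonneg (p₁ - q)]
  have hlow := sqrtD_lower p₁ q s hp1 hq hs
  have hsq1 : Real.sqrt D₁ ^ 2 = D₁ := Real.sq_sqrt hD₁pos.le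
  have key : Real.sqrt D₁ - (p₂ - p₁) ≤ Real.sqrt D₂ := by
    rcases le_or_gt (Real.sqrt D₁ - (p₂ - p₁)) 0 with h | h
    · exact h.trans (Real.sqrt_nonneg _)
    · have h2 : (Real.sqrt D₁ - (p₂ - p₁)) ^ 2 ≤ D₂ := by nlinarith
      calc Real.sqrt D₁ - (p₂ - p₁)
          = Real.sqrt ((Real.sqrt D₁ - (p₂ - p₁)) ^ 2) := by rw [Real.sqrt_sq h.le]
        _ ≤ _ := Real.sqrt_le_sqrt h2
  linarith

private lemma aux_s (p q s₁ s₂ : ℝ) (hp : 0 < p) (hq : 0 < q) (hs1 : 0 < s₁)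
    (hs : s₁ ≤ s₂) :
    (p + q + s₁ + Real.sqrt ((p + q + s₁) ^ 2 - 4 * p * q)) / 2 ≤
      (p + q + s₂ + Real.sqrt ((p + q + s₂) ^ 2 - 4 * p * q)) / 2 := by
  have h : (p + q + s₁) ^ 2 - 4 * p * q ≤ (p + q + s₂) ^ 2 - 4 * p * q := by nlinarith
  have := Real.sqrt_le_sqrt h
  linarith

/-- Monotonicity of the largest root: if `P, Q, Σ` are positive nonincreasing
differentiable functions on an interval `I` with discriminant
`D = (P+Q+Σ)² - 4PQ > 0`, then the largest root `τ⁺ = (P+Q+Σ+√D)/2` of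
`τ² - (P+Q+Σ)τ + PQ` is nonincreasing on `I`. -/
theorem largest_root_antitone
    (I : Set ℝ) (hI : Convex ℝ I)
    (P Q S : ℝ → ℝ)
    (hPd : DifferentiableOn ℝ P I) (hQd : DifferentiableOn ℝ Q I)
    (hSd : DifferentiableOn ℝ S I)
    (hPpos : ∀ μ ∈ I, 0 < P μ) (hQpos : ∀ μ ∈ I, 0 < Q μ)
    (hSpos : ∀ μ ∈ I, 0 < S μ)
    (hP : AntitoneOn P I) (hQ : AntitoneOn Q I) (hS : AntitoneOn S I)
    (hD : ∀ μ ∈ I, 0 < (P μ + Q μ + S μ) ^ 2 - 4 * P μ * Q μ) :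
    AntitoneOn (fun μ =>
      (P μ + Q μ + S μ + Real.sqrt ((P μ + Q μ + S μ) ^ 2 - 4 * P μ * Q μ)) / 2) I := by
  intro x hx y hy hxy
  simp only
  have hPx := hPpos x hx; have hQx := hQpos x hx; have hSx := hSpos x hx
  have hPy := hPpos y hy; have hQy := hQpos y hy; have hSy := hSpos y hy
  have h1 : (P y + Q y + S y + Real.sqrt ((P y + Q y + S y) ^ 2 - 4 * P y * Q y)) / 2 ≤
      (P x + Q y + S y + Real.sqrt ((P x + Q y + S y) ^ 2 - 4 * P x * Q y)) / 2 :=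
    aux_p (P y) (P x) (Q y) (S y) hPy (hP hx hy hxy) hQy hSy
  have h2 : (P x + Q y + S y + Real.sqrt ((P x + Q y + S y) ^ 2 - 4 * P x * Q y)) / 2 ≤
      (P x + Q x + S y + Real.sqrt ((P x + Q x + S y) ^ 2 - 4 * P x * Q x)) / 2 := by
    have := aux_p (Q y) (Q x) (P x) (S y) hQy (hQ hx hy hxy) hPx hSy
    have e1 : (Q y + P x + S y) ^ 2 - 4 * Q y * P x
        = (P x + Q y + S y) ^ 2 - 4 * P x * Q y := by ring
    have e2 : (Q x + P x + S y) ^ 2 - 4 * Q x * P x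
        = (P x + Q x + S y) ^ 2 - 4 * P x * Q x := by ring
    rw [e1, e2] at this
    linarith
  have h3 : (P x + Q x + S y + Real.sqrt ((P x + Q x + S y) ^ 2 - 4 * P x * Q x)) / 2 ≤
      (P x + Q x + S x + Real.sqrt ((P x + Q x + S x) ^ 2 - 4 * P x * Q x)) / 2 :=
    aux_s (P x) (Q x) (S y) (S x) hPx hQx hSy (hS hx hy hxy)
  linarith
end

section
/- Let c, ν, L > 0. There exists a constant C > 0 (independent of J and δt) such that for every J ∈ ℕ* and every δt ∈ (0, 1/(c + 4ν(J+1)²/L²)), the matrices M_s = [[I, 0], [c δt C_s⁻¹, B_s C_s⁻¹]] and M_f = [[B_f C_f⁻¹, c δt C_f⁻¹], [0, I]], with B_z = I - (1-θ_z)δt(cI + (ν/δx²)A) and C_z = I + θ_z δt(cI + (ν/δx²)A), θ_z ∈ [0,1], δx = L/(J+1), satisfy |||M_s|||₂ ≤ C and |||M_f|||₂ ≤ C. One may take C = √(2(2 + c²/(c + 16ν/L²)²)). -/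
open Matrix

/-- The `J×J` tridiagonal Toeplitz matrix `toeplitz(-1, 2, -1)`. -/
def tridiagA (J : ℕ) : Matrix (Fin J) (Fin J) ℝ := fun i j =>
  if i = j then 2 else if i.val + 1 = j.val ∨ j.val + 1 = i.val then -1 else 0

namespace SplitAux

set_option linter.unusedSectionVars false
set_option linter.unusedVariables false

variable {n : Type*} [Fintype n] [DecidableEq n]

lemma dot_self_nonneg (x : n → ℝ) : 0 ≤ x ⬝ᵥ x :=
  Finset.sum_nonneg fun i _ => mul_self_nonneg _

lemma sym_dot {A : Matrix n n ℝ} (hA : Aᵀ = A) (x y : n → ℝ) :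
    (A *ᵥ x) ⬝ᵥ y = x ⬝ᵥ (A *ᵥ y) := by
  rw [dotProduct_mulVec, ← mulVec_transpose, hA, dotProduct_comm]

def shiftU (J : ℕ) : Matrix (Fin J) (Fin J) ℝ := fun i j =>
  if i.val + 1 = j.val then 1 else 0

lemma tridiagA_eq (J : ℕ) :
    tridiagA J = (2 : ℝ) • (1 : Matrix (Fin J) (Fin J) ℝ) - shiftU J - (shiftU J)ᵀ := by
  ext i j
  simp only [tridiagA, shiftU, Matrix.sub_apply, Matrix.smul_apply, Matrix.one_apply,
    Matrix.transpose_apply, smul_eq_mul]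
  by_cases h1 : i = j
  · subst h1
    have : ¬ (i.val + 1 = i.val) := by omega
    simp [this]
  · have h1' : ¬ (i.val = j.val) := fun h => h1 (Fin.ext h)
    by_cases h2 : i.val + 1 = j.val
    · have h3 : ¬ (j.val + 1 = i.val) := by omega
      simp [h1, h2, h3]
    · by_cases h3 : j.val + 1 = i.val
      · simp [h1, h2, h3]
      · simp [h1, h2, h3]

lemma tridiagA_symm (J : ℕ) : (tridiagA J)ᵀ = tridiagA J := by
  rw [tridiagA_eq]
  simp only [transpose_sub, transpose_smul, transpose_one, transpose_transpose]
  rw [sub_right_comm]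

lemma shiftU_mulVec (J : ℕ) (x : Fin J → ℝ) (i : Fin J) :
    (shiftU J *ᵥ x) i = if h : i.val + 1 < J then x ⟨i.val + 1, h⟩ else 0 := by
  simp only [mulVec, dotProduct, shiftU]
  split
  · next h =>
      rw [Finset.sum_eq_single (⟨i.val + 1, h⟩ : Fin J)]
      · simp
      · intro j _ hj
        rw [if_neg, zero_mul]
        intro hc; exact hj (Fin.ext hc.symm)
      · simp
  · next h =>
      apply Finset.sum_eq_zero; intro j _
      rw [if_neg, zero_mul]
      intro hc; exact h (hc ▸ j.isLt)

lemma tridiag_quad_bounds (J : ℕ) (x : Fin J → ℝ) :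
    0 ≤ x ⬝ᵥ (tridiagA J *ᵥ x) ∧ x ⬝ᵥ (tridiagA J *ᵥ x) ≤ 4 * (x ⬝ᵥ x) := by
  set U := shiftU J with hU
  set S := x ⬝ᵥ x with hS
  set T := x ⬝ᵥ (U *ᵥ x) with hT
  have hUt : x ⬝ᵥ (Uᵀ *ᵥ x) = T := by
    rw [mulVec_transpose, dotProduct_comm, ← dotProduct_mulVec]
  have hquad : x ⬝ᵥ (tridiagA J *ᵥ x) = 2 * S - 2 * T := by
    rw [tridiagA_eq J, sub_mulVec, sub_mulVec, smul_mulVec, one_mulVec,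
      dotProduct_sub, dotProduct_sub, dotProduct_smul, hUt, ← hU, ← hT, smul_eq_mul, ← hS]
    ring
  -- the extension of x by zero
  set y : ℕ → ℝ := fun m => if h : m < J then x ⟨m, h⟩ else 0 with hy
  have hyx : ∀ i : Fin J, x i = y i.val := by
    intro i; rw [hy]; simp [i.isLt]
  have hUy : ∀ i : Fin J, (U *ᵥ x) i = y (i.val + 1) := by
    intro i; rw [hU, shiftU_mulVec, hy]
  have hSy : S = ∑ m ∈ Finset.range J, (y m) ^ 2 := by
    rw [← Fin.sum_univ_eq_sum_range (fun m => (y m) ^ 2) J, hS]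
    simp only [dotProduct]
    exact Finset.sum_congr rfl fun i _ => by rw [hyx i, pow_two]
  have hshift : ∑ i : Fin J, ((U *ᵥ x) i) ^ 2 ≤ S := by
    have h1 : ∑ i : Fin J, ((U *ᵥ x) i) ^ 2 = ∑ m ∈ Finset.range J, (y (m + 1)) ^ 2 := by
      rw [← Fin.sum_univ_eq_sum_range (fun m => (y (m + 1)) ^ 2) J]
      exact Finset.sum_congr rfl fun i _ => by rw [hUy i]
    have h2 : ∑ m ∈ Finset.range (J + 1), (y m) ^ 2
        = (∑ m ∈ Finset.range J, (y (m + 1)) ^ 2) + (y 0) ^ 2 :=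
      Finset.sum_range_succ' (fun m => (y m) ^ 2) J
    have h3 : ∑ m ∈ Finset.range (J + 1), (y m) ^ 2
        = (∑ m ∈ Finset.range J, (y m) ^ 2) + (y J) ^ 2 :=
      Finset.sum_range_succ (fun m => (y m) ^ 2) J
    have h4 : y J = 0 := by rw [hy]; simp
    have h5 : (0:ℝ) ≤ (y 0) ^ 2 := sq_nonneg _
    rw [h1, hSy]
    nlinarith [h2, h3]
  have hCS : T ^ 2 ≤ S * S := by
    have := Finset.sum_mul_sq_le_sq_mul_sq Finset.univ (fun i => x i) (fun i => (U *ᵥ x) i)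
    have hTe : T = ∑ i : Fin J, x i * (U *ᵥ x) i := by rw [hT]; rfl
    have hSe : S = ∑ i : Fin J, (x i) ^ 2 := by
      rw [hS]; exact Finset.sum_congr rfl fun i _ => (pow_two _).symm
    have hS0 : 0 ≤ S := dot_self_nonneg x
    calc T ^ 2 ≤ (∑ i : Fin J, (x i) ^ 2) * (∑ i : Fin J, ((U *ᵥ x) i) ^ 2) := by
          rw [hTe]; exact this
      _ ≤ S * S := by
          rw [← hSe]
          exact mul_le_mul_of_nonneg_left hshift hS0
  have hS0 : 0 ≤ S := dot_self_nonneg x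
  constructor
  · rw [hquad]; nlinarith
  · rw [hquad]; nlinarith

lemma isHermitian_of_symm {A : Matrix n n ℝ} (hA : Aᵀ = A) : A.IsHermitian := by
  rw [Matrix.IsHermitian, conjTranspose_eq_transpose_of_trivial, hA]

lemma transpose_of_isHermitian {A : Matrix n n ℝ} (hA : A.IsHermitian) : Aᵀ = A := by
  rw [← conjTranspose_eq_transpose_of_trivial]; exact hA

lemma posSemidef_of_quad {A : Matrix n n ℝ} (hA : Aᵀ = A)
    (h : ∀ x : n → ℝ, 0 ≤ x ⬝ᵥ (A *ᵥ x)) : A.PosSemidef :=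
  PosSemidef.of_dotProduct_mulVec_nonneg (isHermitian_of_symm hA) fun x => by simpa using h x

open scoped MatrixOrder in
lemma key_ineq {P : Matrix n n ℝ} {μ : ℝ} (hP : P.PosSemidef)
    (hμ : ((μ • 1 : Matrix n n ℝ) - P).PosSemidef) (x : n → ℝ) :
    (P *ᵥ x) ⬝ᵥ (P *ᵥ x) ≤ μ * (x ⬝ᵥ (P *ᵥ x)) := by
  have hPsym : Pᵀ = P := transpose_of_isHermitian hP.1
  set S := CFC.sqrt P with hSdef
  have hS2 : S * S = P := CFC.sqrt_mul_sqrt_self P hP.nonneg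
  have hSsym : Sᵀ = S := transpose_of_isHermitian (CFC.sqrt_nonneg P).posSemidef.1
  have h0 : 0 ≤ (S *ᵥ x) ⬝ᵥ (((μ • 1 : Matrix n n ℝ) - P) *ᵥ (S *ᵥ x)) := by
    simpa using hμ.dotProduct_mulVec_nonneg (S *ᵥ x)
  have e1 : (S *ᵥ x) ⬝ᵥ (S *ᵥ x) = x ⬝ᵥ (P *ᵥ x) := by
    rw [sym_dot hSsym, mulVec_mulVec, hS2]
  have e2 : (S *ᵥ x) ⬝ᵥ (P *ᵥ (S *ᵥ x)) = (P *ᵥ x) ⬝ᵥ (P *ᵥ x) := by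
    rw [sym_dot hSsym, mulVec_mulVec, mulVec_mulVec]
    have h : S * P * S = P * P := by
      rw [← hS2]; noncomm_ring
    rw [h, ← mulVec_mulVec, ← sym_dot hPsym]
  rw [sub_mulVec, dotProduct_sub, smul_mulVec, one_mulVec, dotProduct_smul,
    smul_eq_mul, e1, e2] at h0
  linarith

/-- All the propagator bounds for `Cθ = 1 + (θ δt) • K`, `Bθ = 1 - ((1-θ) δt) • K`. -/
lemma propagator_bounds {K : Matrix n n ℝ} {μ δt θ : ℝ}
    (hKsym : Kᵀ = K) (hK : K.PosSemidef)
    (hμ : ((μ • 1 : Matrix n n ℝ) - K).PosSemidef)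
    (hθ0 : 0 ≤ θ) (hθ1 : θ ≤ 1) (hδt : 0 < δt) (hCFL : δt * μ ≤ 1) :
    (∀ y : n → ℝ, (((1 : Matrix n n ℝ) + (θ * δt) • K)⁻¹ *ᵥ y) ⬝ᵥ
        (((1 : Matrix n n ℝ) + (θ * δt) • K)⁻¹ *ᵥ y) ≤ y ⬝ᵥ y) ∧
    (∀ y : n → ℝ,
      ((((1 : Matrix n n ℝ) - ((1 - θ) * δt) • K) *
          ((1 : Matrix n n ℝ) + (θ * δt) • K)⁻¹) *ᵥ y) ⬝ᵥ
      ((((1 : Matrix n n ℝ) - ((1 - θ) * δt) • K) *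
          ((1 : Matrix n n ℝ) + (θ * δt) • K)⁻¹) *ᵥ y) ≤ y ⬝ᵥ y) := by
  set a := (1 - θ) * δt with ha
  set b := θ * δt with hb
  have ha0 : 0 ≤ a := mul_nonneg (by linarith) hδt.le
  have hb0 : 0 ≤ b := mul_nonneg hθ0 hδt.le
  have hab : a + b = δt := by rw [ha, hb]; ring
  set Cθ := (1 : Matrix n n ℝ) + b • K with hCθ
  set Bθ := (1 : Matrix n n ℝ) - a • K with hBθ
  have hbK : (b • K).PosSemidef := by
    refine posSemidef_of_quad ?_ fun x => ?_
    · rw [transpose_smul, hKsym]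
    · rw [smul_mulVec, dotProduct_smul, smul_eq_mul]
      have := hK.dotProduct_mulVec_nonneg x
      simp only [star_trivial] at this
      exact mul_nonneg hb0 this
  have hCpos : Cθ.PosDef := Matrix.PosDef.add_posSemidef Matrix.PosDef.one hbK
  have hCunit : IsUnit Cθ.det := (Matrix.isUnit_iff_isUnit_det _).1 hCpos.isUnit
  have hCC : Cθ * Cθ⁻¹ = 1 := Matrix.mul_nonsing_inv _ hCunit
  -- quadratic expansions
  have hKq : ∀ x : n → ℝ, 0 ≤ x ⬝ᵥ (K *ᵥ x) := fun x => by
    have := hK.dotProduct_mulVec_nonneg x; simpa using this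
  have hkey : ∀ x : n → ℝ, (K *ᵥ x) ⬝ᵥ (K *ᵥ x) ≤ μ * (x ⬝ᵥ (K *ᵥ x)) :=
    fun x => key_ineq hK hμ x
  have hCquad : ∀ x : n → ℝ, (Cθ *ᵥ x) ⬝ᵥ (Cθ *ᵥ x)
      = x ⬝ᵥ x + 2 * b * (x ⬝ᵥ (K *ᵥ x)) + b ^ 2 * ((K *ᵥ x) ⬝ᵥ (K *ᵥ x)) := by
    intro x
    have hident : Cθ *ᵥ x = x + b • (K *ᵥ x) := by
      rw [hCθ, add_mulVec, one_mulVec, smul_mulVec]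
    rw [hident]
    simp only [dotProduct_add, add_dotProduct, dotProduct_smul, smul_dotProduct,
      smul_eq_mul]
    rw [dotProduct_comm (K *ᵥ x) x]
    ring
  have hBquad : ∀ x : n → ℝ, (Bθ *ᵥ x) ⬝ᵥ (Bθ *ᵥ x)
      = x ⬝ᵥ x - 2 * a * (x ⬝ᵥ (K *ᵥ x)) + a ^ 2 * ((K *ᵥ x) ⬝ᵥ (K *ᵥ x)) := by
    intro x
    have hident : Bθ *ᵥ x = x - a • (K *ᵥ x) := by
      rw [hBθ, sub_mulVec, one_mulVec, smul_mulVec]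
    rw [hident]
    simp only [dotProduct_sub, sub_dotProduct, dotProduct_smul, smul_dotProduct,
      smul_eq_mul]
    rw [dotProduct_comm (K *ᵥ x) x]
    ring
  have hmain : ∀ x : n → ℝ, (Bθ *ᵥ x) ⬝ᵥ (Bθ *ᵥ x) ≤ (Cθ *ᵥ x) ⬝ᵥ (Cθ *ᵥ x) := by
    intro x
    set t := x ⬝ᵥ (K *ᵥ x) with ht
    set sq := (K *ᵥ x) ⬝ᵥ (K *ᵥ x) with hsq
    have ht0 : 0 ≤ t := hKq x
    have hsq0 : 0 ≤ sq := dot_self_nonneg _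
    have hsμt : sq ≤ μ * t := hkey x
    have h1 : (a - b) * sq ≤ δt * sq :=
      mul_le_mul_of_nonneg_right (by linarith) hsq0
    have h2 : δt * sq ≤ δt * (μ * t) := mul_le_mul_of_nonneg_left hsμt hδt.le
    have h3 : δt * (μ * t) ≤ t := by
      have := mul_le_mul_of_nonneg_right hCFL ht0
      calc δt * (μ * t) = (δt * μ) * t := by ring
        _ ≤ 1 * t := this
        _ = t := one_mul t
    have h4 : (a - b) * sq ≤ t := by linarith
    have h5 : (a + b) * ((a - b) * sq) ≤ (a + b) * t := by
      apply mul_le_mul_of_nonneg_left h4 (by linarith)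
    rw [hBquad, hCquad, ← ht, ← hsq]
    nlinarith [h5]
  have hClow : ∀ x : n → ℝ, x ⬝ᵥ x ≤ (Cθ *ᵥ x) ⬝ᵥ (Cθ *ᵥ x) := by
    intro x
    have ht0 : 0 ≤ x ⬝ᵥ (K *ᵥ x) := hKq x
    have hsq0 : 0 ≤ (K *ᵥ x) ⬝ᵥ (K *ᵥ x) := dot_self_nonneg _
    rw [hCquad]
    nlinarith
  constructor
  · intro y
    set x := Cθ⁻¹ *ᵥ y with hx
    have hCx : Cθ *ᵥ x = y := by
      rw [hx, mulVec_mulVec, hCC, one_mulVec]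
    calc x ⬝ᵥ x ≤ (Cθ *ᵥ x) ⬝ᵥ (Cθ *ᵥ x) := hClow x
      _ = y ⬝ᵥ y := by rw [hCx]
  · intro y
    set x := Cθ⁻¹ *ᵥ y with hx
    have hCx : Cθ *ᵥ x = y := by
      rw [hx, mulVec_mulVec, hCC, one_mulVec]
    have hBx : (Bθ * Cθ⁻¹) *ᵥ y = Bθ *ᵥ x := by
      rw [← mulVec_mulVec, ← hx]
    rw [hBx]
    calc (Bθ *ᵥ x) ⬝ᵥ (Bθ *ᵥ x) ≤ (Cθ *ᵥ x) ⬝ᵥ (Cθ *ᵥ x) := hmain x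
      _ = y ⬝ᵥ y := by rw [hCx]

/-- `(p+q)⬝(p+q) ≤ 2 p⬝p + 2 q⬝q`. -/
lemma dot_add_le (p q : n → ℝ) :
    (p + q) ⬝ᵥ (p + q) ≤ 2 * (p ⬝ᵥ p) + 2 * (q ⬝ᵥ q) := by
  have h := dot_self_nonneg (p - q)
  simp only [dotProduct_add, add_dotProduct, dotProduct_sub, sub_dotProduct] at *
  have := dotProduct_comm p q
  linarith

/-- operator norm bound from the quadratic bound. -/
lemma opNorm_le_of_quad {m : Type*} [Fintype m] [DecidableEq m]
    (M : Matrix m m ℝ) (Cb : ℝ) (hC : 0 ≤ Cb)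
    (h : ∀ v : m → ℝ, (M *ᵥ v) ⬝ᵥ (M *ᵥ v) ≤ Cb ^ 2 * (v ⬝ᵥ v)) :
    ‖Matrix.toEuclideanCLM (𝕜 := ℝ) M‖ ≤ Cb := by
  refine ContinuousLinearMap.opNorm_le_bound _ hC fun y => ?_
  set v : m → ℝ := WithLp.equiv 2 (m → ℝ) y with hv
  have h1 : Matrix.toEuclideanCLM (𝕜 := ℝ) M y
      = (WithLp.equiv 2 (m → ℝ)).symm (M *ᵥ v) := by
    rw [hv]; rfl
  have hnorm : ∀ w : m → ℝ, ‖(WithLp.equiv 2 (m → ℝ)).symm w‖ = Real.sqrt (w ⬝ᵥ w) := by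
    intro w
    rw [EuclideanSpace.norm_eq]
    congr 1
    simp [dotProduct, Real.norm_eq_abs, sq_abs, pow_two]
  have hy : ‖y‖ = Real.sqrt (v ⬝ᵥ v) := by
    rw [← hnorm v, hv]
    simp
  rw [h1, hnorm, hy]
  calc Real.sqrt ((M *ᵥ v) ⬝ᵥ (M *ᵥ v)) ≤ Real.sqrt (Cb ^ 2 * (v ⬝ᵥ v)) :=
        Real.sqrt_le_sqrt (h v)
    _ = Cb * Real.sqrt (v ⬝ᵥ v) := by
        rw [Real.sqrt_mul (sq_nonneg _), Real.sqrt_sq hC]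

/-- Quadratic bound for the lower-triangular block matrix. -/
lemma block_quad_lower (E F : Matrix n n ℝ) (g : ℝ)
    (hE : ∀ u : n → ℝ, (E *ᵥ u) ⬝ᵥ (E *ᵥ u) ≤ g ^ 2 * (u ⬝ᵥ u))
    (hF : ∀ u : n → ℝ, (F *ᵥ u) ⬝ᵥ (F *ᵥ u) ≤ u ⬝ᵥ u)
    (x : n ⊕ n → ℝ) :
    ((fromBlocks (1 : Matrix n n ℝ) (0 : Matrix n n ℝ) E F) *ᵥ x) ⬝ᵥ
      ((fromBlocks (1 : Matrix n n ℝ) (0 : Matrix n n ℝ) E F) *ᵥ x)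
      ≤ (2 * (2 + g ^ 2)) * (x ⬝ᵥ x) := by
  set u := x ∘ Sum.inl with hu
  set w := x ∘ Sum.inr with hw
  have hx : x = Sum.elim u w := by
    ext i; cases i <;> rfl
  have hmb' : (fromBlocks 1 0 E F) *ᵥ x = Sum.elim u (E *ᵥ u + F *ᵥ w) := by
    rw [fromBlocks_mulVec (1 : Matrix n n ℝ) (0 : Matrix n n ℝ) E F x,
      ← hu, ← hw, one_mulVec, zero_mulVec, add_zero]
  rw [hmb', sumElim_dotProduct_sumElim]
  have hb : (E *ᵥ u + F *ᵥ w) ⬝ᵥ (E *ᵥ u + F *ᵥ w)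
      ≤ 2 * (g ^ 2 * (u ⬝ᵥ u)) + 2 * (w ⬝ᵥ w) := by
    calc (E *ᵥ u + F *ᵥ w) ⬝ᵥ (E *ᵥ u + F *ᵥ w)
        ≤ 2 * ((E *ᵥ u) ⬝ᵥ (E *ᵥ u)) + 2 * ((F *ᵥ w) ⬝ᵥ (F *ᵥ w)) := dot_add_le _ _
      _ ≤ 2 * (g ^ 2 * (u ⬝ᵥ u)) + 2 * (w ⬝ᵥ w) := by
          have := hE u; have := hF w; linarith
  have hxx : x ⬝ᵥ x = u ⬝ᵥ u + w ⬝ᵥ w := by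
    conv_lhs => rw [hx]
    rw [sumElim_dotProduct_sumElim]
  rw [hxx]
  have h1 : 0 ≤ u ⬝ᵥ u := dot_self_nonneg u
  have h2 : 0 ≤ w ⬝ᵥ w := dot_self_nonneg w
  have h3 : 0 ≤ g ^ 2 := sq_nonneg g
  nlinarith [hb]

/-- Quadratic bound for the upper-triangular block matrix. -/
lemma block_quad_upper (E F : Matrix n n ℝ) (g : ℝ)
    (hE : ∀ u : n → ℝ, (E *ᵥ u) ⬝ᵥ (E *ᵥ u) ≤ g ^ 2 * (u ⬝ᵥ u))
    (hF : ∀ u : n → ℝ, (F *ᵥ u) ⬝ᵥ (F *ᵥ u) ≤ u ⬝ᵥ u)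
    (x : n ⊕ n → ℝ) :
    ((fromBlocks F E (0 : Matrix n n ℝ) (1 : Matrix n n ℝ)) *ᵥ x) ⬝ᵥ
      ((fromBlocks F E (0 : Matrix n n ℝ) (1 : Matrix n n ℝ)) *ᵥ x)
      ≤ (2 * (2 + g ^ 2)) * (x ⬝ᵥ x) := by
  set u := x ∘ Sum.inl with hu
  set w := x ∘ Sum.inr with hw
  have hx : x = Sum.elim u w := by
    ext i; cases i <;> rfl
  have hmb' : (fromBlocks F E 0 1) *ᵥ x = Sum.elim (F *ᵥ u + E *ᵥ w) w := by
    rw [fromBlocks_mulVec F E (0 : Matrix n n ℝ) (1 : Matrix n n ℝ) x,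
      ← hu, ← hw, one_mulVec, zero_mulVec, zero_add]
  rw [hmb', sumElim_dotProduct_sumElim]
  have hb : (F *ᵥ u + E *ᵥ w) ⬝ᵥ (F *ᵥ u + E *ᵥ w)
      ≤ 2 * (u ⬝ᵥ u) + 2 * (g ^ 2 * (w ⬝ᵥ w)) := by
    calc (F *ᵥ u + E *ᵥ w) ⬝ᵥ (F *ᵥ u + E *ᵥ w)
        ≤ 2 * ((F *ᵥ u) ⬝ᵥ (F *ᵥ u)) + 2 * ((E *ᵥ w) ⬝ᵥ (E *ᵥ w)) := dot_add_le _ _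
      _ ≤ 2 * (u ⬝ᵥ u) + 2 * (g ^ 2 * (w ⬝ᵥ w)) := by
          have := hE w; have := hF u; linarith
  have hxx : x ⬝ᵥ x = u ⬝ᵥ u + w ⬝ᵥ w := by
    conv_lhs => rw [hx]
    rw [sumElim_dotProduct_sumElim]
  rw [hxx]
  have h1 : 0 ≤ u ⬝ᵥ u := dot_self_nonneg u
  have h2 : 0 ≤ w ⬝ᵥ w := dot_self_nonneg w
  have h3 : 0 ≤ g ^ 2 := sq_nonneg g
  nlinarith [hb]

end SplitAux

open SplitAux

/-- Uniform bound of the Euclidean operator norms of the split propagation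
matrices `M_s` and `M_f` under the CFL condition `δt ≤ 1/(c + 4ν/δx²)`:
one may take `C = √(2(2 + c²/(c + 16ν/L²)²))`. -/
theorem splitting_matrices_uniformly_bounded
    (c ν L θs θf : ℝ) (hc : 0 < c) (hν : 0 < ν) (hL : 0 < L)
    (hθs : θs ∈ Set.Icc (0:ℝ) 1) (hθf : θf ∈ Set.Icc (0:ℝ) 1) :
    let C : ℝ := Real.sqrt (2 * (2 + c ^ 2 / (c + 16 * ν / L ^ 2) ^ 2))
    0 < C ∧
    ∀ J : ℕ, 0 < J → ∀ δt : ℝ, 0 < δt →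
      δt < 1 / (c + 4 * ν * ((J : ℝ) + 1) ^ 2 / L ^ 2) →
      let δx : ℝ := L / ((J : ℝ) + 1)
      let K : Matrix (Fin J) (Fin J) ℝ :=
        c • (1 : Matrix (Fin J) (Fin J) ℝ) + (ν / δx ^ 2) • tridiagA J
      let Bs := (1 : Matrix (Fin J) (Fin J) ℝ) - ((1 - θs) * δt) • K
      let Cs := (1 : Matrix (Fin J) (Fin J) ℝ) + (θs * δt) • K
      let Bf := (1 : Matrix (Fin J) (Fin J) ℝ) - ((1 - θf) * δt) • K
      let Cf := (1 : Matrix (Fin J) (Fin J) ℝ) + (θf * δt) • K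
      let Ms : Matrix (Fin J ⊕ Fin J) (Fin J ⊕ Fin J) ℝ :=
        Matrix.fromBlocks 1 0 ((c * δt) • Cs⁻¹) (Bs * Cs⁻¹)
      let Mf : Matrix (Fin J ⊕ Fin J) (Fin J ⊕ Fin J) ℝ :=
        Matrix.fromBlocks (Bf * Cf⁻¹) ((c * δt) • Cf⁻¹) 0 1
      ‖Matrix.toEuclideanCLM (𝕜 := ℝ) Ms‖ ≤ C ∧
      ‖Matrix.toEuclideanCLM (𝕜 := ℝ) Mf‖ ≤ C := by
  intro C
  have hgd0 : 0 < c + 16 * ν / L ^ 2 := by positivity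
  set g : ℝ := c / (c + 16 * ν / L ^ 2) with hgdef
  have hgpos : 0 < g := by positivity
  have hCdef : C = Real.sqrt (2 * (2 + c ^ 2 / (c + 16 * ν / L ^ 2) ^ 2)) := rfl
  have hC2 : C ^ 2 = 2 * (2 + g ^ 2) := by
    rw [hCdef, Real.sq_sqrt (by positivity), hgdef, div_pow]
  have hCpos : 0 < C := by rw [hCdef]; positivity
  refine ⟨hCpos, ?_⟩
  intro J hJ δt hδt hCFL
  intro δx K Bs Cs Bf Cf Ms Mf
  have hδxdef : δx = L / ((J : ℝ) + 1) := rfl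
  have hJ1 : (1 : ℝ) ≤ (J : ℝ) := by exact_mod_cast hJ
  have hδx0 : 0 < δx := by rw [hδxdef]; positivity
  set s' : ℝ := ν / δx ^ 2 with hs'def
  have hs'0 : 0 < s' := by positivity
  set E : ℝ := c + 4 * ν * ((J : ℝ) + 1) ^ 2 / L ^ 2 with hEdef
  have hE0 : 0 < E := by rw [hEdef]; positivity
  have hsE : c + 4 * s' = E := by
    rw [hs'def, hδxdef, hEdef, div_pow, div_div_eq_mul_div]
    ring
  have hCFL' : δt * E < 1 := (lt_div_iff₀ hE0).1 hCFL
  have hge : c + 16 * ν / L ^ 2 ≤ E := by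
    have h4 : (4 : ℝ) ≤ ((J : ℝ) + 1) ^ 2 := by nlinarith
    have h16 : (16 : ℝ) * ν = 4 * ν * 4 := by ring
    have h5 : 16 * ν / L ^ 2 ≤ 4 * ν * ((J : ℝ) + 1) ^ 2 / L ^ 2 := by
      rw [h16]
      gcongr
    rw [hEdef]; linarith
  have hcδt : c * δt ≤ g := by
    have h1 : c * δt * E < c * 1 := by
      calc c * δt * E = c * (δt * E) := by ring
        _ < c * 1 := by exact mul_lt_mul_of_pos_left hCFL' hc
    have h2 : c * δt ≤ c / E := by
      rw [le_div_iff₀ hE0]; linarith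
    have h3 : c / E ≤ g := by
      rw [hgdef]
      exact div_le_div_of_nonneg_left hc.le hgd0 hge
    linarith
  have hcδt0 : 0 ≤ c * δt := by positivity
  -- matrix facts
  have hKdef : K = c • (1 : Matrix (Fin J) (Fin J) ℝ) + s' • tridiagA J := rfl
  have hKsym : Kᵀ = K := by
    rw [hKdef, transpose_add, transpose_smul, transpose_smul, transpose_one, tridiagA_symm]
  have hKquad : ∀ x : Fin J → ℝ, x ⬝ᵥ (K *ᵥ x)
      = c * (x ⬝ᵥ x) + s' * (x ⬝ᵥ (tridiagA J *ᵥ x)) := by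
    intro x
    rw [hKdef, add_mulVec, smul_mulVec, smul_mulVec, one_mulVec,
      dotProduct_add, dotProduct_smul, dotProduct_smul, smul_eq_mul, smul_eq_mul]
  have hKpsd : K.PosSemidef := by
    refine posSemidef_of_quad hKsym fun x => ?_
    rw [hKquad]
    have h1 := (tridiag_quad_bounds J x).1
    have h2 := dot_self_nonneg x
    have := hc.le
    positivity
  set μ : ℝ := c + 4 * s' with hμdef
  have hμK : ((μ • 1 : Matrix (Fin J) (Fin J) ℝ) - K).PosSemidef := by
    refine posSemidef_of_quad ?_ fun x => ?_
    · rw [transpose_sub, transpose_smul, transpose_one, hKsym]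
    · rw [sub_mulVec, dotProduct_sub, smul_mulVec, one_mulVec, dotProduct_smul,
        smul_eq_mul, hKquad, hμdef]
      have h1 := (tridiag_quad_bounds J x).2
      have h2 := dot_self_nonneg x
      nlinarith [hs'0.le]
  have hCFLμ : δt * μ ≤ 1 := by rw [hsE]; exact hCFL'.le
  have hprops := propagator_bounds hKsym hKpsd hμK hθs.1 hθs.2 hδt hCFLμ
  have hpropf := propagator_bounds hKsym hKpsd hμK hθf.1 hθf.2 hδt hCFLμ
  -- the scaled inverse block
  have hEblock : ∀ (Cθ : Matrix (Fin J) (Fin J) ℝ)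
      (hCinv : ∀ y : Fin J → ℝ, (Cθ⁻¹ *ᵥ y) ⬝ᵥ (Cθ⁻¹ *ᵥ y) ≤ y ⬝ᵥ y)
      (u : Fin J → ℝ),
      (((c * δt) • Cθ⁻¹) *ᵥ u) ⬝ᵥ (((c * δt) • Cθ⁻¹) *ᵥ u) ≤ g ^ 2 * (u ⬝ᵥ u) := by
    intro Cθ hCinv u
    rw [smul_mulVec, dotProduct_smul, smul_dotProduct, smul_eq_mul, smul_eq_mul]
    have h1 : (Cθ⁻¹ *ᵥ u) ⬝ᵥ (Cθ⁻¹ *ᵥ u) ≤ u ⬝ᵥ u := hCinv u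
    have h2 : 0 ≤ (Cθ⁻¹ *ᵥ u) ⬝ᵥ (Cθ⁻¹ *ᵥ u) := dot_self_nonneg _
    have huu0 : 0 ≤ u ⬝ᵥ u := dot_self_nonneg u
    have ha : (c * δt) * (c * δt) ≤ g * g := mul_le_mul hcδt hcδt hcδt0 hgpos.le
    have hgg : (0:ℝ) ≤ g * g := mul_nonneg hgpos.le hgpos.le
    calc c * δt * (c * δt * ((Cθ⁻¹ *ᵥ u) ⬝ᵥ (Cθ⁻¹ *ᵥ u)))
        = ((c * δt) * (c * δt)) * ((Cθ⁻¹ *ᵥ u) ⬝ᵥ (Cθ⁻¹ *ᵥ u)) := by ring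
      _ ≤ (g * g) * ((Cθ⁻¹ *ᵥ u) ⬝ᵥ (Cθ⁻¹ *ᵥ u)) := mul_le_mul_of_nonneg_right ha h2
      _ ≤ (g * g) * (u ⬝ᵥ u) := mul_le_mul_of_nonneg_left h1 hgg
      _ = g ^ 2 * (u ⬝ᵥ u) := by ring
  constructor
  · apply opNorm_le_of_quad Ms C hCpos.le
    intro v
    rw [hC2]
    exact block_quad_lower ((c * δt) • Cs⁻¹) (Bs * Cs⁻¹) g
      (hEblock Cs hprops.1) hprops.2 v
  · apply opNorm_le_of_quad Mf C hCpos.le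
    intro v
    rw [hC2]
    exact block_quad_upper ((c * δt) • Cf⁻¹) (Bf * Cf⁻¹) g
      (hEblock Cf hpropf.1) hpropf.2 v
end

section
/- The pair of functions u(x) = (u_l+v_l)/2 + (u_r+v_r-u_l-v_l)x/(2L) + (u_l-v_l)[cosh(x/α) - cosh(L/α) sinh(x/α)/sinh(L/α)]/2 + (u_r-v_r) sinh(x/α)/(2 sinh(L/α)) and v(x) = (u_l+v_l)/2 + (u_r+v_r-u_l-v_l)x/(2L) - (u_l-v_l)[cosh(x/α) - cosh(L/α) sinh(x/α)/sinh(L/α)]/2 - (u_r-v_r) sinh(x/α)/(2 sinh(L/α)), with α = √(ν/(2c)), is a stationary solution of the system Nν u'' + Nc(v - u) = 0, ν v'' + c(u - v) = 0 on (0, L) satisfying u(0) = u_l, u(L) = u_r, v(0) = v_l, v(L) = v_r; moreover it is the unique such solution. -/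
open Real

lemma shape_hasDerivAt (a b c1 c2 α x : ℝ) :
    HasDerivAt (fun x => a + b * x + (c1 * Real.cosh (x / α) + c2 * Real.sinh (x / α)))
      (b + (c1 * Real.sinh (x / α) + c2 * Real.cosh (x / α)) / α) x := by
  have hc : HasDerivAt (fun x : ℝ => Real.cosh (x / α)) (Real.sinh (x / α) * (1 / α)) x :=
    ((hasDerivAt_id x).div_const α).cosh
  have hs : HasDerivAt (fun x : ℝ => Real.sinh (x / α)) (Real.cosh (x / α) * (1 / α)) x :=
    ((hasDerivAt_id x).div_const α).sinh
  have h := ((hasDerivAt_const x a).add ((hasDerivAt_id x).const_mul b)).add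
    ((hc.const_mul c1).add (hs.const_mul c2))
  exact h.congr_deriv (by ring)

lemma shape_deriv (a b c1 c2 α : ℝ) :
    deriv (fun x => a + b * x + (c1 * Real.cosh (x / α) + c2 * Real.sinh (x / α)))
      = fun x => b + (c1 * Real.sinh (x / α) + c2 * Real.cosh (x / α)) / α :=
  funext fun x => (shape_hasDerivAt a b c1 c2 α x).deriv

lemma shape_deriv2 (a b c1 c2 α : ℝ) (x : ℝ) :
    deriv (deriv (fun x => a + b * x + (c1 * Real.cosh (x / α) + c2 * Real.sinh (x / α)))) x
      = (c1 * Real.cosh (x / α) + c2 * Real.sinh (x / α)) / α ^ 2 := by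
  rw [shape_deriv]
  have hc : HasDerivAt (fun x : ℝ => Real.cosh (x / α)) (Real.sinh (x / α) * (1 / α)) x :=
    ((hasDerivAt_id x).div_const α).cosh
  have hs : HasDerivAt (fun x : ℝ => Real.sinh (x / α)) (Real.cosh (x / α) * (1 / α)) x :=
    ((hasDerivAt_id x).div_const α).sinh
  have h := (((hs.const_mul c1).add (hc.const_mul c2)).div_const α).const_add b
  rw [(show HasDerivAt (fun x => b + (c1 * Real.sinh (x / α) + c2 * Real.cosh (x / α)) / α) _ x from h).deriv]
  ring

lemma shape_contDiff (a b c1 c2 α : ℝ) :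
    ContDiff ℝ 2 (fun x => a + b * x + (c1 * Real.cosh (x / α) + c2 * Real.sinh (x / α))) := by
  have hdiv : ContDiff ℝ 2 (fun x : ℝ => x / α) := contDiff_id.div_const α
  exact (contDiff_const.add (contDiff_const.mul contDiff_id)).add
    ((contDiff_const.mul hdiv.cosh).add (contDiff_const.mul hdiv.sinh))

lemma contDiff_two_bits {f : ℝ → ℝ} (hf : ContDiff ℝ 2 f) :
    Differentiable ℝ f ∧ Differentiable ℝ (deriv f) ∧ Continuous (deriv (deriv f)) := by
  have h2 : ContDiff ℝ ((1 : WithTop ℕ∞) + 1) f := by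
    have e : ((1 : WithTop ℕ∞) + 1) = 2 := by norm_num
    rw [e]; exact hf
  have h := contDiff_succ_iff_deriv.mp h2
  have h1 := contDiff_one_iff_deriv.mp h.2.2
  exact ⟨h.1, h1.1, h1.2⟩

lemma zero_on_Icc_of_deriv2_zero {L : ℝ} (hL : 0 < L) {f : ℝ → ℝ} (hf : ContDiff ℝ 2 f)
    (h0 : f 0 = 0) (hLv : f L = 0)
    (hd : ∀ x ∈ Set.Ioo 0 L, deriv (deriv f) x = 0) :
    ∀ x ∈ Set.Icc 0 L, f x = 0 := by
  obtain ⟨hdf, hdf1, hc2⟩ := contDiff_two_bits hf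
  have hdIcc : ∀ x ∈ Set.Icc (0:ℝ) L, deriv (deriv f) x = 0 := by
    have hsub : Set.Ioo (0:ℝ) L ⊆ {y | deriv (deriv f) y = 0} := hd
    have hcl : IsClosed {y | deriv (deriv f) y = 0} := isClosed_eq hc2 continuous_const
    intro x hx
    have : x ∈ closure (Set.Ioo (0:ℝ) L) := by rwa [closure_Ioo hL.ne]
    exact hcl.closure_subset_iff.mpr hsub this
  have hdfc : ∀ x ∈ Set.Icc (0:ℝ) L, deriv f x = deriv f 0 := by
    apply constant_of_has_deriv_right_zero (hdf1.continuous.continuousOn)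
    intro x hx
    have h := (hdf1 x).hasDerivAt
    rw [hdIcc x (Set.Ico_subset_Icc_self hx)] at h
    exact h.hasDerivWithinAt
  have hgc : ∀ x ∈ Set.Icc (0:ℝ) L, f x - deriv f 0 * x = f 0 - deriv f 0 * 0 := by
    apply constant_of_has_deriv_right_zero
      ((hdf.continuous.sub (continuous_const.mul continuous_id)).continuousOn)
    intro x hx
    have h := ((hdf x).hasDerivAt.sub ((hasDerivAt_id x).const_mul (deriv f 0)))
    rw [hdfc x (Set.Ico_subset_Icc_self hx)] at h
    rw [mul_one, sub_self] at h
    exact h.hasDerivWithinAt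
  have hL0 := hgc L ⟨hL.le, le_rfl⟩
  rw [h0, hLv] at hL0
  have hd0 : deriv f 0 = 0 := by
    have : deriv f 0 * L = 0 := by linarith
    rcases mul_eq_zero.mp this with h | h
    · exact h
    · exact absurd h hL.ne'
  intro x hx
  have := hgc x hx
  rw [h0, hd0] at this
  linarith

lemma zero_on_Icc_of_deriv2_eq {L k : ℝ} (hL : 0 < L) (hk : 0 < k) {f : ℝ → ℝ}
    (hf : ContDiff ℝ 2 f) (h0 : f 0 = 0) (hLv : f L = 0)
    (hd : ∀ x ∈ Set.Ioo 0 L, deriv (deriv f) x = k ^ 2 * f x) :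
    ∀ x ∈ Set.Icc 0 L, f x = 0 := by
  obtain ⟨hdf, hdf1, hc2⟩ := contDiff_two_bits hf
  have hdIcc : ∀ x ∈ Set.Icc (0:ℝ) L, deriv (deriv f) x = k ^ 2 * f x := by
    have hsub : Set.Ioo (0:ℝ) L ⊆ {y | deriv (deriv f) y - k ^ 2 * f y = 0} := by
      intro y hy; simp [hd y hy]
    have hcl : IsClosed {y | deriv (deriv f) y - k ^ 2 * f y = 0} :=
      isClosed_eq (hc2.sub (continuous_const.mul hdf.continuous)) continuous_const
    intro x hx
    have hx' : x ∈ closure (Set.Ioo (0:ℝ) L) := by rwa [closure_Ioo hL.ne]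
    have := hcl.closure_subset_iff.mpr hsub hx'
    simpa [sub_eq_zero] using this
  have hF : ∀ x ∈ Set.Icc (0:ℝ) L,
      (deriv f x - k * f x) * Real.exp (k * x)
        = (deriv f 0 - k * f 0) * Real.exp (k * 0) := by
    apply constant_of_has_deriv_right_zero
    · exact ((hdf1.continuous.sub (continuous_const.mul hdf.continuous)).mul
        (Real.continuous_exp.comp (continuous_const.mul continuous_id))).continuousOn
    intro x hx
    have hexp : HasDerivAt (fun y : ℝ => Real.exp (k * y)) (Real.exp (k * x) * k) x := by
      have := ((hasDerivAt_id x).const_mul k).exp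
      simpa using this
    have h := ((hdf1 x).hasDerivAt.sub ((hdf x).hasDerivAt.const_mul k)).mul hexp
    have hval : (deriv (deriv f) x - k * deriv f x) * Real.exp (k * x)
        + (deriv f x - k * f x) * (Real.exp (k * x) * k) = 0 := by
      rw [hdIcc x (Set.Ico_subset_Icc_self hx)]; ring
    rw [Pi.sub_apply, hval] at h
    exact h.hasDerivWithinAt
  have hG : ∀ x ∈ Set.Icc (0:ℝ) L,
      (deriv f x + k * f x) * Real.exp (-(k * x))
        = (deriv f 0 + k * f 0) * Real.exp (-(k * 0)) := by
    apply constant_of_has_deriv_right_zero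
    · exact ((hdf1.continuous.add (continuous_const.mul hdf.continuous)).mul
        (Real.continuous_exp.comp (continuous_const.mul continuous_id).neg)).continuousOn
    intro x hx
    have hexp : HasDerivAt (fun y : ℝ => Real.exp (-(k * y))) (Real.exp (-(k * x)) * (-k)) x := by
      have := (((hasDerivAt_id x).const_mul k).neg).exp
      simpa using this
    have h := ((hdf1 x).hasDerivAt.add ((hdf x).hasDerivAt.const_mul k)).mul hexp
    have hval : (deriv (deriv f) x + k * deriv f x) * Real.exp (-(k * x))
        + (deriv f x + k * f x) * (Real.exp (-(k * x)) * (-k)) = 0 := by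
      rw [hdIcc x (Set.Ico_subset_Icc_self hx)]; ring
    rw [Pi.add_apply, hval] at h
    exact h.hasDerivWithinAt
  have hFL := hF L ⟨hL.le, le_rfl⟩
  have hGL := hG L ⟨hL.le, le_rfl⟩
  rw [h0, hLv] at hFL hGL
  simp only [mul_zero, Real.exp_zero, mul_one, sub_zero, add_zero, neg_zero] at hFL hGL
  have hd0 : deriv f 0 = 0 := by
    have hlt : Real.exp (-(k * L)) < Real.exp (k * L) := by
      apply Real.exp_lt_exp.mpr; nlinarith
    have h1 : deriv f L * Real.exp (k * L) = deriv f 0 := hFL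
    have h2 : deriv f L * Real.exp (-(k * L)) = deriv f 0 := hGL
    have h3 : deriv f L * (Real.exp (k * L) - Real.exp (-(k * L))) = 0 := by nlinarith [h1, h2]
    have h4 : deriv f L = 0 := by
      rcases mul_eq_zero.mp h3 with h | h
      · exact h
      · nlinarith
    nlinarith [Real.exp_pos (k * L), h1, h4]
  intro x hx
  have h1 := hF x hx
  have h2 := hG x hx
  rw [h0, hd0] at h1 h2
  simp only [mul_zero, Real.exp_zero, mul_one, sub_zero, add_zero, zero_sub, zero_add,
    zero_mul] at h1 h2
  have he1 : deriv f x - k * f x = 0 := by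
    have := Real.exp_pos (k * x)
    rcases mul_eq_zero.mp h1 with h | h
    · exact h
    · nlinarith
  have he2 : deriv f x + k * f x = 0 := by
    have := Real.exp_pos (-(k * x))
    rcases mul_eq_zero.mp h2 with h | h
    · exact h
    · nlinarith
  nlinarith

/-- The explicit stationary solution of the coupled system
`Nν u'' + Nc(v - u) = 0`, `ν v'' + c(u - v) = 0` on `(0,L)` with inhomogeneous
Dirichlet boundary conditions `u(0)=u_l, u(L)=u_r, v(0)=v_l, v(L)=v_r`,
where `α = √(ν/(2c))`; moreover it is the unique such solution. -/
theorem stationary_solution_inhomogeneous_Dirichlet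
    (L ν c N u_l u_r v_l v_r : ℝ)
    (hL : 0 < L) (hν : 0 < ν) (hc : 0 < c) (hN : 0 < N) :
    let α : ℝ := Real.sqrt (ν / (2 * c))
    let u : ℝ → ℝ := fun x =>
      (u_l + v_l) / 2 + (u_r + v_r - u_l - v_l) * x / (2 * L)
      + (u_l - v_l) * (Real.cosh (x / α)
          - Real.cosh (L / α) * Real.sinh (x / α) / Real.sinh (L / α)) / 2
      + (u_r - v_r) * Real.sinh (x / α) / (2 * Real.sinh (L / α))
    let v : ℝ → ℝ := fun x =>
      (u_l + v_l) / 2 + (u_r + v_r - u_l - v_l) * x / (2 * L)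
      - (u_l - v_l) * (Real.cosh (x / α)
          - Real.cosh (L / α) * Real.sinh (x / α) / Real.sinh (L / α)) / 2
      - (u_r - v_r) * Real.sinh (x / α) / (2 * Real.sinh (L / α))
    (u 0 = u_l ∧ u L = u_r ∧ v 0 = v_l ∧ v L = v_r) ∧
    (∀ x : ℝ,
      N * ν * deriv (deriv u) x + N * c * (v x - u x) = 0 ∧
      ν * deriv (deriv v) x + c * (u x - v x) = 0) ∧
    (∀ u₂ v₂ : ℝ → ℝ, ContDiff ℝ 2 u₂ → ContDiff ℝ 2 v₂ →
      u₂ 0 = u_l → u₂ L = u_r → v₂ 0 = v_l → v₂ L = v_r →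
      (∀ x ∈ Set.Ioo (0:ℝ) L,
        N * ν * deriv (deriv u₂) x + N * c * (v₂ x - u₂ x) = 0 ∧
        ν * deriv (deriv v₂) x + c * (u₂ x - v₂ x) = 0) →
      ∀ x ∈ Set.Icc (0:ℝ) L, u₂ x = u x ∧ v₂ x = v x) := by
  intro α u v
  have hαpos : 0 < α := Real.sqrt_pos.mpr (by positivity)
  have hα2 : α ^ 2 = ν / (2 * c) := Real.sq_sqrt (by positivity)
  have hsh : Real.sinh (L / α) ≠ 0 :=
    ne_of_gt (Real.sinh_pos_iff.mpr (by positivity))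
  have hL0 : L ≠ 0 := hL.ne'
  -- abbreviations for the coefficients of the canonical shape
  set A := (u_l + v_l) / 2 with hA
  set B := (u_r + v_r - u_l - v_l) / (2 * L) with hB
  set C1 := (u_l - v_l) / 2 with hC1
  set C2 := ((u_r - v_r) - (u_l - v_l) * Real.cosh (L / α)) / (2 * Real.sinh (L / α)) with hC2
  have hu : u = fun x => A + B * x + (C1 * Real.cosh (x / α) + C2 * Real.sinh (x / α)) := by
    funext x
    show (u_l + v_l) / 2 + (u_r + v_r - u_l - v_l) * x / (2 * L)
      + (u_l - v_l) * (Real.cosh (x / α)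
          - Real.cosh (L / α) * Real.sinh (x / α) / Real.sinh (L / α)) / 2
      + (u_r - v_r) * Real.sinh (x / α) / (2 * Real.sinh (L / α)) = _
    rw [hA, hB, hC1, hC2]
    field_simp
    ring
  have hv : v = fun x =>
      A + B * x + ((-C1) * Real.cosh (x / α) + (-C2) * Real.sinh (x / α)) := by
    funext x
    show (u_l + v_l) / 2 + (u_r + v_r - u_l - v_l) * x / (2 * L)
      - (u_l - v_l) * (Real.cosh (x / α)
          - Real.cosh (L / α) * Real.sinh (x / α) / Real.sinh (L / α)) / 2
      - (u_r - v_r) * Real.sinh (x / α) / (2 * Real.sinh (L / α)) = _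
    rw [hA, hB, hC1, hC2]
    field_simp
    ring
  -- boundary values
  have hU0 : u 0 = u_l := by
    rw [hu]; simp [Real.cosh_zero, Real.sinh_zero, hA, hC1]; ring
  have hUL : u L = u_r := by
    rw [hu]; simp only [hA, hB, hC1, hC2]; field_simp; ring
  have hV0 : v 0 = v_l := by
    rw [hv]; simp [Real.cosh_zero, Real.sinh_zero, hA, hC1]; ring
  have hVL : v L = v_r := by
    rw [hv]; simp only [hA, hB, hC1, hC2]; field_simp; ring
  -- the ODE system is satisfied everywhere
  have hdu2 : ∀ x : ℝ, deriv (deriv u) x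
      = (C1 * Real.cosh (x / α) + C2 * Real.sinh (x / α)) / α ^ 2 := by
    intro x; rw [hu]; exact shape_deriv2 A B C1 C2 α x
  have hdv2 : ∀ x : ℝ, deriv (deriv v) x
      = ((-C1) * Real.cosh (x / α) + (-C2) * Real.sinh (x / α)) / α ^ 2 := by
    intro x; rw [hv]; exact shape_deriv2 A B (-C1) (-C2) α x
  have hαν : α ^ 2 ≠ 0 := by positivity
  have hmain : ∀ x : ℝ,
      N * ν * deriv (deriv u) x + N * c * (v x - u x) = 0 ∧
      ν * deriv (deriv v) x + c * (u x - v x) = 0 := by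
    intro x
    have hux : u x = A + B * x + (C1 * Real.cosh (x / α) + C2 * Real.sinh (x / α)) := by
      rw [hu]
    have hvx : v x = A + B * x + ((-C1) * Real.cosh (x / α) + (-C2) * Real.sinh (x / α)) := by
      rw [hv]
    constructor
    · rw [hdu2 x, hux, hvx, hα2]
      field_simp
      ring
    · rw [hdv2 x, hux, hvx, hα2]
      field_simp
      ring
  refine ⟨⟨hU0, hUL, hV0, hVL⟩, hmain, ?_⟩
  -- uniqueness
  intro u₂ v₂ hu₂ hv₂ hb1 hb2 hb3 hb4 hode
  have hCu : ContDiff ℝ 2 u := hu ▸ shape_contDiff A B C1 C2 α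
  have hCv : ContDiff ℝ 2 v := hv ▸ shape_contDiff A B (-C1) (-C2) α
  obtain ⟨hDu₂, hDu₂1, _⟩ := contDiff_two_bits hu₂
  obtain ⟨hDv₂, hDv₂1, _⟩ := contDiff_two_bits hv₂
  obtain ⟨hDu, hDu1, _⟩ := contDiff_two_bits hCu
  obtain ⟨hDv, hDv1, _⟩ := contDiff_two_bits hCv
  set k := Real.sqrt (2 * c / ν) with hkdef
  have hkpos : 0 < k := Real.sqrt_pos.mpr (by positivity)
  have hk2 : k ^ 2 = 2 * c / ν := Real.sq_sqrt (by positivity)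
  -- second derivatives of sums/differences
  have hds1 : deriv (fun y => u₂ y + v₂ y - u y - v y)
      = fun y => deriv u₂ y + deriv v₂ y - deriv u y - deriv v y := by
    funext y
    exact ((((hDu₂ y).hasDerivAt.add (hDv₂ y).hasDerivAt).sub
      (hDu y).hasDerivAt).sub (hDv y).hasDerivAt).deriv
  have hds2 : ∀ y : ℝ, deriv (deriv (fun y => u₂ y + v₂ y - u y - v y)) y
      = deriv (deriv u₂) y + deriv (deriv v₂) y - deriv (deriv u) y - deriv (deriv v) y := by
    intro y
    rw [hds1]
    exact ((((hDu₂1 y).hasDerivAt.add (hDv₂1 y).hasDerivAt).sub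
      (hDu1 y).hasDerivAt).sub (hDv1 y).hasDerivAt).deriv
  have hdd1 : deriv (fun y => u₂ y - v₂ y - u y + v y)
      = fun y => deriv u₂ y - deriv v₂ y - deriv u y + deriv v y := by
    funext y
    exact ((((hDu₂ y).hasDerivAt.sub (hDv₂ y).hasDerivAt).sub
      (hDu y).hasDerivAt).add (hDv y).hasDerivAt).deriv
  have hdd2 : ∀ y : ℝ, deriv (deriv (fun y => u₂ y - v₂ y - u y + v y)) y
      = deriv (deriv u₂) y - deriv (deriv v₂) y - deriv (deriv u) y + deriv (deriv v) y := by
    intro y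
    rw [hdd1]
    exact ((((hDu₂1 y).hasDerivAt.sub (hDv₂1 y).hasDerivAt).sub
      (hDu1 y).hasDerivAt).add (hDv1 y).hasDerivAt).deriv
  -- the ODE relations in normalized form
  have hrel : ∀ x ∈ Set.Ioo (0:ℝ) L,
      ν * deriv (deriv u₂) x = c * (u₂ x - v₂ x) ∧
      ν * deriv (deriv v₂) x = c * (v₂ x - u₂ x) := by
    intro x hx
    obtain ⟨e1, e2⟩ := hode x hx
    constructor
    · apply mul_left_cancel₀ hN.ne'
      linear_combination e1
    · linear_combination e2
  have hrel0 : ∀ x : ℝ,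
      ν * deriv (deriv u) x = c * (u x - v x) ∧
      ν * deriv (deriv v) x = c * (v x - u x) := by
    intro x
    obtain ⟨e1, e2⟩ := hmain x
    constructor
    · apply mul_left_cancel₀ hN.ne'
      linear_combination e1
    · linear_combination e2
  -- s := u₂ + v₂ - u - v vanishes on [0, L]
  have hszero : ∀ x ∈ Set.Icc (0:ℝ) L, (fun y => u₂ y + v₂ y - u y - v y) x = 0 := by
    apply zero_on_Icc_of_deriv2_zero hL (((hu₂.add hv₂).sub hCu).sub hCv)
    · simp only [hb1, hb3, hU0, hV0]; ring
    · simp only [hb2, hb4, hUL, hVL]; ring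
    · intro x hx
      obtain ⟨e1, e2⟩ := hrel x hx
      obtain ⟨e3, e4⟩ := hrel0 x
      rw [hds2 x]
      apply mul_left_cancel₀ hν.ne'
      linear_combination e1 + e2 - e3 - e4
  -- d := u₂ - v₂ - u + v vanishes on [0, L]
  have hdzero : ∀ x ∈ Set.Icc (0:ℝ) L, (fun y => u₂ y - v₂ y - u y + v y) x = 0 := by
    apply zero_on_Icc_of_deriv2_eq hL hkpos (((hu₂.sub hv₂).sub hCu).add hCv)
    · simp only [hb1, hb3, hU0, hV0]; ring
    · simp only [hb2, hb4, hUL, hVL]; ring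
    · intro x hx
      obtain ⟨e1, e2⟩ := hrel x hx
      obtain ⟨e3, e4⟩ := hrel0 x
      rw [hdd2 x, hk2, div_mul_eq_mul_div, eq_div_iff hν.ne']
      linear_combination e1 - e2 - e3 + e4
  intro x hx
  have e1 := hszero x hx
  have e2 := hdzero x hx
  simp only at e1 e2
  constructor <;> linarith
end
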